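/- arXiv:1206.5581 — 7 statements merged into one kernel-verified Lean document; each statement's English description precedes it below -/
import Mathlib

section
/- If (X, τ) is a Baire topological space, then the space X(τ) := {x ∈ (τ⁺)^ω : ⋂_{n<ω} x(n) ≠ ∅}, viewed as a subspace of the product space (τ⁺)^ω where τ⁺ (the collection of nonempty open subsets of X) carries the discrete topology, is also a Baire space. -/
open Set Topology

/-- The set of nonempty open subsets of `X` (denoted `τ⁺` in the paper). -/
abbrev PosOpen (X : Type) [TopologicalSpace X] : Type :=
  {U : Set X // IsOpen U ∧ U.Nonempty}

/-- `τ⁺` carries the discrete topology. -/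
instance (priority := high) PosOpen.topology (X : Type) [TopologicalSpace X] :
    TopologicalSpace (PosOpen X) := ⊥

/-- `X(τ) = {x ∈ (τ⁺)^ω : ⋂ₙ x(n) ≠ ∅}`, a subspace of the product `(τ⁺)^ω`. -/
abbrev SeqSpace (X : Type) [TopologicalSpace X] : Type :=
  {x : ℕ → PosOpen X // (⋂ n, ((x n).1 : Set X)).Nonempty}

/-!
The basic open sets of `X(τ)` are the cylinders of finite sequences `t` of nonempty open sets
with `⋂ t ≠ ∅`. Given dense open sets `D₀, D₁, …` and such a `t₀`, build a tree of finite
sequences: below each node `t` of level `k` put a maximal family of extensions of length `> k`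
whose cylinders lie in `Dₖ` and whose intersections are pairwise disjoint; by maximality the
union of these intersections is dense in `⋂ t`. Hence the union `Gₖ` of the intersections of the
nodes of level `k` is open and dense in `⋂ t₀`, and the Baire property of `X` yields a point
`y ∈ ⋂ₖ Gₖ` inside `⋂ t₀`. By disjointness the nodes whose intersection contains `y` form a
branch of the tree; the infinite sequence along this branch lies in every `Dₖ`, and in `X(τ)`
because its terms all contain `y`.
-/

section Sequences

variable {α : Type*}

theorem exists_forall_eq_getElem_of_isPrefix_chain {u : ℕ → List α}
    (hu : ∀ k, u k <+: u (k + 1)) (hlen : ∀ k, k ≤ (u k).length) :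
    ∃ x : ℕ → α, ∀ k i (hi : i < (u k).length), x i = (u k)[i] := by
  have hmono := Nat.rel_of_forall_rel_succ_of_le (· <+: ·) hu
  refine ⟨fun n => (u (n + 1))[n]'(hlen (n + 1)), fun k i hi => ?_⟩
  rcases le_total (i + 1) k with h | h
  · exact (hmono h).getElem _
  · exact ((hmono h).getElem hi).symm

theorem prefix_ofFn_of_forall_eq_getElem {t : List α} {x : ℕ → α}
    (hx : ∀ i (hi : i < t.length), x i = t[i]) {n : ℕ} (hn : t.length ≤ n) :
    t <+: List.ofFn fun i : Fin n => x i := by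
  rw [List.prefix_iff_eq_take]
  refine List.ext_getElem (by simpa using hn) fun i hi _ => ?_
  simp [hx i hi]

end Sequences

section Tree

variable {ι X : Type*} (Fam : ℕ → ι → Set ι) (i₀ : ι)

def treeLevel : ℕ → Set ι
  | 0 => {i₀}
  | k + 1 => ⋃ i ∈ treeLevel k, Fam k i

theorem pairwiseDisjoint_treeLevel {Fam} {W : ι → Set X}
    (hdisj : ∀ k i, (Fam k i).PairwiseDisjoint W)
    (hsub : ∀ k i, ∀ j ∈ Fam k i, W j ⊆ W i) :
    ∀ k, (treeLevel Fam i₀ k).PairwiseDisjoint W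
  | 0 => pairwiseDisjoint_singleton _ _
  | k + 1 => PairwiseDisjoint.biUnion
      ((pairwiseDisjoint_treeLevel hdisj hsub k).mono_on fun i _ => iUnion₂_subset (hsub k i))
      fun i _ => hdisj k i

end Tree

section Topology

variable {X ι : Type*} [TopologicalSpace X]

theorem exists_pairwiseDisjoint_subset_closure_biUnion {W : ι → Set X} {p : ι → Prop}
    {U : Set X} (hU : IsOpen U)
    (h : ∀ V, IsOpen V → V.Nonempty → V ⊆ U → ∃ i, p i ∧ (W i).Nonempty ∧ W i ⊆ V) :
    ∃ F : Set ι, (∀ i ∈ F, p i ∧ W i ⊆ U) ∧ F.PairwiseDisjoint W ∧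
      U ⊆ closure (⋃ i ∈ F, W i) := by
  obtain ⟨F, hF⟩ := zorn_subset {F : Set ι | (∀ i ∈ F, p i ∧ W i ⊆ U) ∧ F.PairwiseDisjoint W}
    fun c hc hchain => ⟨⋃₀ c, ⟨fun i ⟨F, hF, hi⟩ => (hc hF).1 i hi,
      (pairwiseDisjoint_sUnion hchain.directedOn).2 fun F hF => (hc hF).2⟩,
      fun _ => subset_sUnion_of_mem⟩
  refine ⟨F, hF.prop.1, hF.prop.2, ?_⟩
  by_contra hU'
  set C := closure (⋃ i ∈ F, W i)
  obtain ⟨i, hpi, ⟨y, hy⟩, hiV⟩ :=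
    h (U \ C) (hU.sdiff isClosed_closure) (nonempty_of_not_subset hU') sdiff_subset
  have hdisj : ∀ j ∈ F, i ≠ j → Disjoint (W i) (W j) := fun j hj _ =>
    disjoint_sdiff_left.mono hiV ((subset_biUnion_of_mem hj).trans subset_closure)
  have hiF : i ∈ F := hF.mem_of_prop_insert
    ⟨forall_mem_insert.2 ⟨⟨hpi, hiV.trans sdiff_subset⟩, hF.prop.1⟩, hF.prop.2.insert hdisj⟩
  exact (hiV hy).2 (subset_closure (mem_biUnion hiF hy))

theorem nonempty_inter_iInter_of_subset_closure [BaireSpace X] {U : Set X} (hU : IsOpen U)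
    (hne : U.Nonempty) {G : ℕ → Set X} (hG : ∀ k, IsOpen (G k))
    (hUG : ∀ k, U ⊆ closure (G k)) : (U ∩ ⋂ k, G k).Nonempty := by
  have hdense : ∀ k, Dense (G k ∪ (closure U)ᶜ) := fun k x => by
    by_cases hx : x ∈ closure U
    · exact closure_mono subset_union_left (closure_minimal (hUG k) isClosed_closure hx)
    · exact subset_closure (Or.inr hx)
  obtain ⟨y, hyU, hy⟩ := (dense_iInter_of_isOpen
    (fun k => (hG k).union isClosed_closure.isOpen_compl) hdense).inter_open_nonempty U hU hne
  exact ⟨y, hyU, mem_iInter.2 fun k =>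
    (mem_iInter.1 hy k).resolve_right (not_not.2 (subset_closure hyU))⟩

theorem subset_closure_biUnion_treeLevel {Fam : ℕ → ι → Set ι} (i₀ : ι) {W : ι → Set X}
    (hcl : ∀ k i, W i ⊆ closure (⋃ j ∈ Fam k i, W j)) :
    ∀ k, W i₀ ⊆ closure (⋃ i ∈ treeLevel Fam i₀ k, W i)
  | 0 => by simpa [treeLevel] using subset_closure
  | k + 1 => (subset_closure_biUnion_treeLevel i₀ hcl k).trans <| closure_minimal
      (iUnion₂_subset fun i hi => (hcl k i).trans <| closure_mono <|
        biUnion_subset_biUnion_left (subset_biUnion_of_mem (u := Fam k) hi))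
      isClosed_closure

theorem exists_branch_iInter_nonempty [BaireSpace X] {W : ι → Set X} (hW : ∀ i, IsOpen (W i))
    {Q : ℕ → ι → ι → Prop}
    (hQ : ∀ k i V, IsOpen V → V.Nonempty → V ⊆ W i → ∃ j, Q k i j ∧ (W j).Nonempty ∧ W j ⊆ V)
    {i₀ : ι} (h₀ : (W i₀).Nonempty) :
    ∃ u : ℕ → ι, u 0 = i₀ ∧ (∀ k, Q k (u k) (u (k + 1))) ∧ (⋂ k, W (u k)).Nonempty := by
  choose Fam hFam hdisj hcl using fun k i =>
    exists_pairwiseDisjoint_subset_closure_biUnion (hW i) (hQ k i)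
  have hL := pairwiseDisjoint_treeLevel i₀ hdisj fun k i j hj => (hFam k i j hj).2
  obtain ⟨y, -, hy⟩ := nonempty_inter_iInter_of_subset_closure (hW i₀) h₀
    (fun k => isOpen_biUnion fun i _ => hW i) (subset_closure_biUnion_treeLevel i₀ hcl)
  choose u huL hyu using fun k => mem_iUnion₂.1 (mem_iInter.1 hy k)
  refine ⟨u, huL 0, fun k => ?_, y, mem_iInter.2 hyu⟩
  obtain ⟨i, hi, hui⟩ := mem_iUnion₂.1 (huL (k + 1))
  -- the parent `i` of `u (k + 1)` also contains `y`, hence is `u k`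
  obtain rfl : i = u k := (hL k).elim_set hi (huL k) y ((hFam k i _ hui).2 (hyu (k + 1))) (hyu k)
  exact (hFam k _ _ hui).1

end Topology

namespace SeqSpace

variable {X : Type} [TopologicalSpace X]

instance : DiscreteTopology (PosOpen X) := ⟨rfl⟩

def listInter (t : List (PosOpen X)) : Set X := ⋂ U ∈ t, (U : Set X)

theorem isOpen_listInter (t : List (PosOpen X)) : IsOpen (listInter t) :=
  t.finite_toSet.isOpen_biInter fun U _ => U.2.1

def cylinder (t : List (PosOpen X)) : Set (SeqSpace X) :=
  {x | ∀ i (hi : i < t.length), x.1 i = t[i]}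

theorem mem_cylinder_ofFn (x : SeqSpace X) (n : ℕ) :
    x ∈ cylinder (List.ofFn fun i : Fin n => x.1 i) := by
  simp [cylinder]

theorem cylinder_anti {s t : List (PosOpen X)} (h : t <+: s) : cylinder s ⊆ cylinder t :=
  fun _ hx i hi => (hx i (hi.trans_le h.length_le)).trans (h.getElem hi).symm

theorem isOpen_cylinder (t : List (PosOpen X)) : IsOpen (cylinder t) := by
  refine isOpen_iff_forall_mem_open.2 fun x hx =>
    ⟨Subtype.val ⁻¹' PiNat.cylinder x.1 t.length, fun y hy i hi => ?_,
      (PiNat.isOpen_cylinder _ _ _).preimage continuous_subtype_val, PiNat.self_mem_cylinder _ _⟩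
  exact (PiNat.mem_cylinder_iff.1 hy i hi).trans (hx i hi)

theorem exists_cylinder_ofFn_subset {O : Set (SeqSpace X)} (hO : IsOpen O) {x : SeqSpace X}
    (hx : x ∈ O) : ∃ n, cylinder (List.ofFn fun i : Fin n => x.1 i) ⊆ O := by
  obtain ⟨U, hU, rfl⟩ := isOpen_induced_iff.1 hO
  obtain ⟨_, ⟨z, n, rfl⟩, hxz, hzU⟩ :=
    (PiNat.isTopologicalBasis_cylinders _).exists_subset_of_mem_open hx hU
  refine ⟨n, fun y hy => hzU ?_⟩
  rw [← PiNat.mem_cylinder_iff_eq.1 hxz, PiNat.mem_cylinder_iff]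
  intro i hi
  have := hy i (by simpa using hi)
  rwa [List.getElem_ofFn] at this

theorem cylinder_nonempty_iff {t : List (PosOpen X)} :
    (cylinder t).Nonempty ↔ (listInter t).Nonempty := by
  refine ⟨fun ⟨x, hx⟩ => ?_, fun ⟨y, hy⟩ => ?_⟩
  · obtain ⟨y, hy⟩ := x.2
    refine ⟨y, mem_iInter₂.2 fun U hU => ?_⟩
    obtain ⟨i, hi, rfl⟩ := List.mem_iff_getElem.1 hU
    exact hx i hi ▸ mem_iInter.1 hy i
  · classical
    let x : ℕ → PosOpen X := fun n =>
      if hn : n < t.length then t[n] else ⟨listInter t, isOpen_listInter t, y, hy⟩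
    have hxy : ∀ n, y ∈ (x n : Set X) := fun n => by
      by_cases hn : n < t.length
      · simpa [x, hn] using mem_iInter₂.1 hy _ (List.getElem_mem hn)
      · simpa [x, hn] using hy
    exact ⟨⟨x, y, mem_iInter.2 hxy⟩, fun i hi => by simp [x, hi]⟩

theorem exists_extension_cylinder_subset {D : Set (SeqSpace X)} (hDo : IsOpen D) (hDd : Dense D)
    (t : List (PosOpen X)) {V : Set X} (hV : IsOpen V) (hVne : V.Nonempty)
    (hVt : V ⊆ listInter t) (m : ℕ) :
    ∃ s, (t <+: s ∧ m ≤ s.length ∧ cylinder s ⊆ D) ∧ (listInter s).Nonempty ∧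
      listInter s ⊆ V := by
  set t' := t ++ [⟨V, hV, hVne⟩]
  have ht' : (listInter t').Nonempty := by
    obtain ⟨y, hy⟩ := hVne
    refine ⟨y, mem_iInter₂.2 fun U hU => ?_⟩
    rcases List.mem_append.1 hU with hU | hU
    · exact mem_iInter₂.1 (hVt hy) U hU
    · rwa [List.mem_singleton.1 hU]
  obtain ⟨z, hzt, hzD⟩ :=
    hDd.inter_open_nonempty _ (isOpen_cylinder t') (cylinder_nonempty_iff.2 ht')
  obtain ⟨n, hn⟩ := exists_cylinder_ofFn_subset hDo hzD
  set s := List.ofFn fun i : Fin (n + m + t'.length) => z.1 i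
  have hts : t' <+: s := prefix_ofFn_of_forall_eq_getElem hzt (by omega)
  have hns : (List.ofFn fun i : Fin n => z.1 i) <+: s :=
    prefix_ofFn_of_forall_eq_getElem (mem_cylinder_ofFn z n)
      (by simp only [List.length_ofFn]; omega)
  refine ⟨s, ⟨(List.prefix_append _ _).trans hts, by simp only [s, List.length_ofFn]; omega,
    (cylinder_anti hns).trans hn⟩, cylinder_nonempty_iff.1 ⟨z, mem_cylinder_ofFn z _⟩,
    fun y hy => mem_iInter₂.1 hy ⟨V, hV, hVne⟩ ?_⟩
  exact hts.subset (List.mem_append_right _ (List.mem_singleton_self _))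

theorem exists_mem_cylinder_of_isPrefix_chain {u : ℕ → List (PosOpen X)}
    (hu : ∀ k, u k <+: u (k + 1)) (hlen : ∀ k, k ≤ (u k).length)
    (hne : (⋂ k, listInter (u k)).Nonempty) : ∃ x : SeqSpace X, ∀ k, x ∈ cylinder (u k) := by
  obtain ⟨x, hx⟩ := exists_forall_eq_getElem_of_isPrefix_chain hu hlen
  obtain ⟨y, hy⟩ := hne
  refine ⟨⟨x, y, mem_iInter.2 fun n => ?_⟩, hx⟩
  rw [hx (n + 1) n (hlen (n + 1))]
  exact mem_iInter₂.1 (mem_iInter.1 hy (n + 1)) _ (List.getElem_mem _)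

end SeqSpace

open SeqSpace

theorem stmt0 (X : Type) [TopologicalSpace X] [BaireSpace X] :
    BaireSpace (SeqSpace X) := by
  refine ⟨fun D hDo hDd => dense_iff_inter_open.2 fun O hO ⟨x₀, hx₀⟩ => ?_⟩
  obtain ⟨n, hnO⟩ := exists_cylinder_ofFn_subset hO hx₀
  obtain ⟨u, hu₀, hu, hne⟩ := exists_branch_iInter_nonempty isOpen_listInter
    (Q := fun k t s => t <+: s ∧ k + 1 ≤ s.length ∧ cylinder s ⊆ D k)
    (fun k t _ hV hVne hVt =>
      exists_extension_cylinder_subset (hDo k) (hDd k) t hV hVne hVt (k + 1))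
    (cylinder_nonempty_iff.1 ⟨x₀, mem_cylinder_ofFn x₀ n⟩)
  have hlen : ∀ k, k ≤ (u k).length
    | 0 => Nat.zero_le _
    | k + 1 => (hu k).2.1
  obtain ⟨x, hx⟩ := exists_mem_cylinder_of_isPrefix_chain (fun k => (hu k).1) hlen hne
  exact ⟨x, hnO (hu₀ ▸ hx 0), mem_iInter.2 fun k => (hu k).2.2 (hx (k + 1))⟩
end

section
/- If N is a nowhere dense subset of a topological space (X, τ), then φ⁻¹[N] is nowhere dense in X(τ), where φ : X(τ) → X is any function satisfying φ(x) ∈ ⋂_{n<ω} x(n) for every x ∈ X(τ). -/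
open Set Topology

/-!
A basic open set of `X(τ)` prescribes finitely many coordinates, say those below `n`; their
intersection is a nonempty open set, so it contains a nonempty open `W` missing `N`. Prescribing
in addition the `n`-th coordinate to be `W` gives a smaller basic open set, nonempty because all
later coordinates may be `W` too, on which `φ` takes values in `W` and hence avoids `N`.
-/

theorem isNowhereDense_iff_forall_isOpen {X : Type*} [TopologicalSpace X] {s : Set X} :
    IsNowhereDense s ↔
      ∀ U, IsOpen U → U.Nonempty → ∃ V ⊆ U, IsOpen V ∧ V.Nonempty ∧ Disjoint V s := by
  constructor
  · intro hs U hU hUne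
    refine ⟨U \ closure s, sdiff_subset, hU.sdiff isClosed_closure, ?_,
      disjoint_sdiff_left.mono_right subset_closure⟩
    rw [sdiff_nonempty]
    intro hUs
    have : U ⊆ ∅ := hs ▸ hU.subset_interior_iff.mpr hUs
    exact hUne.ne_empty (subset_empty_iff.mp this)
  · intro h
    by_contra hne
    obtain ⟨V, hVsub, hV, hVne, hVs⟩ :=
      h _ isOpen_interior (nonempty_iff_ne_empty.mpr hne)
    have : Disjoint V (closure s) := hVs.closure_right hV
    exact hVne.ne_empty (this.eq_bot_of_le (hVsub.trans interior_subset))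

namespace SeqSpace

variable {X : Type} [TopologicalSpace X]

theorem isOpen_preimage_cylinder (y : SeqSpace X) (n : ℕ) :
    IsOpen (Subtype.val ⁻¹' PiNat.cylinder y.1 n : Set (SeqSpace X)) :=
  (PiNat.isOpen_cylinder _ y.1 n).preimage continuous_subtype_val

theorem exists_preimage_cylinder_subset {U : Set (SeqSpace X)} {y : SeqSpace X}
    (hU : U ∈ 𝓝 y) :
    ∃ n, Subtype.val ⁻¹' PiNat.cylinder y.1 n ⊆ U := by
  obtain ⟨t, ht, htU⟩ := Filter.mem_comap.mp (nhds_induced Subtype.val y ▸ hU)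
  obtain ⟨_, ⟨x, n, rfl⟩, hy, hsub⟩ :=
    (PiNat.isTopologicalBasis_cylinders _).mem_nhds_iff.mp ht
  exact ⟨n, fun w hw => htU (hsub (PiNat.mem_cylinder_iff_eq.mp hy ▸ hw))⟩

theorem isOpen_biInter_lt (y : SeqSpace X) (n : ℕ) : IsOpen (⋂ i < n, ((y.1 i).1 : Set X)) :=
  (finite_Iio n).isOpen_biInter fun i _ => (y.1 i).2.1

theorem nonempty_biInter_lt (y : SeqSpace X) (n : ℕ) :
    (⋂ i < n, ((y.1 i).1 : Set X)).Nonempty :=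
  y.2.mono fun _ ha => mem_iInter₂.mpr fun i _ => mem_iInter.mp ha i

def extend (y : SeqSpace X) (n : ℕ) (W : PosOpen X)
    (hW : W.1 ⊆ ⋂ i < n, ((y.1 i).1 : Set X)) : SeqSpace X :=
  ⟨fun i => if i < n then y.1 i else W, W.2.2.mono fun a ha => mem_iInter.mpr fun i => by
    dsimp only
    split_ifs with hi
    · exact mem_iInter₂.mp (hW ha) i hi
    · exact ha⟩

variable {y : SeqSpace X} {n : ℕ} {W : PosOpen X} {hW : W.1 ⊆ ⋂ i < n, ((y.1 i).1 : Set X)}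

theorem preimage_cylinder_extend_subset :
    (Subtype.val ⁻¹' PiNat.cylinder (y.extend n W hW).1 (n + 1) : Set (SeqSpace X)) ⊆
      Subtype.val ⁻¹' PiNat.cylinder y.1 n := fun _ hw i hi =>
  (hw i (hi.trans n.lt_succ_self)).trans (if_pos hi)

theorem apply_eq_of_mem_cylinder_extend {w : SeqSpace X}
    (hw : w.1 ∈ PiNat.cylinder (y.extend n W hW).1 (n + 1)) : w.1 n = W :=
  (hw n n.lt_succ_self).trans (if_neg n.lt_irrefl)

end SeqSpace

theorem stmt1 (X : Type) [TopologicalSpace X]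
    (φ : SeqSpace X → X) (hφ : ∀ x : SeqSpace X, φ x ∈ ⋂ n, ((x.1 n).1 : Set X))
    (N : Set X) (hN : IsNowhereDense N) :
    IsNowhereDense (φ ⁻¹' N) := by
  rw [isNowhereDense_iff_forall_isOpen] at hN ⊢
  rintro U hU ⟨y, hy⟩
  obtain ⟨n, hnU⟩ := SeqSpace.exists_preimage_cylinder_subset (hU.mem_nhds hy)
  obtain ⟨W, hWy, hW, hWne, hWN⟩ :=
    hN _ (SeqSpace.isOpen_biInter_lt y n) (SeqSpace.nonempty_biInter_lt y n)
  let z := y.extend n ⟨W, hW, hWne⟩ hWy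
  refine ⟨_, SeqSpace.preimage_cylinder_extend_subset.trans hnU,
    SeqSpace.isOpen_preimage_cylinder z (n + 1), ⟨z, PiNat.self_mem_cylinder _ _⟩,
    disjoint_left.mpr fun w hw hwN => ?_⟩
  have hφw : φ w ∈ (w.1 n).1 := mem_iInter.mp (hφ w) n
  rw [SeqSpace.apply_eq_of_mem_cylinder_extend hw] at hφw
  exact disjoint_left.mp hWN hφw hwN
end

section
/- If M is a meager subset of a topological space (X, τ), then φ⁻¹[M] is meager in X(τ), where φ : X(τ) → X is any function satisfying φ(x) ∈ ⋂_{n<ω} x(n) for every x ∈ X(τ). -/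
/-!
Fix a closed nowhere dense `F ⊆ X`, so `D = Fᶜ` is open and dense. The sequences `x` some
coordinate `x(n)` of which lies inside `D` form an open set of `X(τ)`, which is dense: keep the
first `k` coordinates of `x` and replace all later ones by `(x(0) ∩ ⋯ ∩ x(k-1)) ∩ D ≠ ∅`; these
sequences converge to `x` as `k → ∞`. Since `φ(x) ∈ x(n)`, `φ` maps this open dense set into `D`,
so `φ⁻¹[F]` is nowhere dense, and meagreness passes to preimages one nowhere dense set at a time.
-/

open Set Topology

open Filter

theorem IsMeagre.preimage_of_forall_isNowhereDense_preimage {X Y : Type*} [TopologicalSpace X]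
    [TopologicalSpace Y] {f : X → Y}
    (hf : ∀ t, IsNowhereDense t → IsNowhereDense (f ⁻¹' t)) {s : Set Y} (hs : IsMeagre s) :
    IsMeagre (f ⁻¹' s) := by
  obtain ⟨S, hS, hSc, hsS⟩ := isMeagre_iff_countable_union_isNowhereDense.1 hs
  refine (isMeagre_biUnion hSc fun t ht ↦ (hf t (hS t ht)).isMeagre).mono ?_
  simpa only [sUnion_eq_biUnion, preimage_iUnion₂] using preimage_mono hsS

namespace SeqSpace

variable {X : Type} [TopologicalSpace X]

instance inst_s2 : DiscreteTopology (PosOpen X) := ⟨rfl⟩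

def prefixInter (x : SeqSpace X) (k : ℕ) : Set X :=
  ⋂ i ∈ Finset.range k, ((x.1 i).1 : Set X)

theorem isOpen_prefixInter (x : SeqSpace X) (k : ℕ) : IsOpen (x.prefixInter k) :=
  isOpen_biInter_finset fun i _ ↦ (x.1 i).2.1

theorem nonempty_prefixInter (x : SeqSpace X) (k : ℕ) : (x.prefixInter k).Nonempty :=
  x.2.mono fun _ hp ↦ mem_iInter₂.2 fun i _ ↦ mem_iInter.1 hp i

def splice (x : SeqSpace X) (k : ℕ) (W : PosOpen X) (hW : W.1 ⊆ x.prefixInter k) :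
    SeqSpace X :=
  ⟨fun n ↦ if n < k then x.1 n else W, by
    obtain ⟨q, hq⟩ := W.2.2
    refine ⟨q, mem_iInter.2 fun n ↦ ?_⟩
    dsimp only
    split_ifs with hn
    · exact mem_iInter₂.1 (hW hq) n (Finset.mem_range.2 hn)
    · exact hq⟩

theorem tendsto_splice (x : SeqSpace X) (W : ℕ → PosOpen X)
    (hW : ∀ k, (W k).1 ⊆ x.prefixInter k) :
    Tendsto (fun k ↦ x.splice k (W k) (hW k)) atTop (𝓝 x) := by
  refine tendsto_subtype_rng.2 <| tendsto_pi_nhds.2 fun n ↦ tendsto_const_nhds.congr' ?_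
  filter_upwards [eventually_gt_atTop n] with k hk
  exact (if_pos hk).symm

def enters (D : Set X) : Set (SeqSpace X) :=
  {x | ∃ n, ((x.1 n).1 : Set X) ⊆ D}

theorem isOpen_enters (D : Set X) : IsOpen (enters D) := by
  simp only [enters, ofPred_exists]
  exact isOpen_iUnion fun n ↦
    (isOpen_discrete {U : PosOpen X | U.1 ⊆ D}).preimage
      ((continuous_apply n).comp continuous_subtype_val : Continuous fun x : SeqSpace X ↦ x.1 n)

theorem dense_enters {D : Set X} (hDo : IsOpen D) (hDd : Dense D) :
    Dense (enters D : Set (SeqSpace X)) := by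
  intro x
  have hW : ∀ k, IsOpen (x.prefixInter k ∩ D) ∧ (x.prefixInter k ∩ D).Nonempty := fun k ↦
    ⟨(x.isOpen_prefixInter k).inter hDo,
      hDd.inter_open_nonempty _ (x.isOpen_prefixInter k) (x.nonempty_prefixInter k)⟩
  refine mem_closure_of_tendsto
    (x.tendsto_splice (fun k ↦ ⟨_, hW k⟩) fun _ ↦ inter_subset_left) 
    (Eventually.of_forall fun k ↦ ⟨k, ?_⟩)
  simp only [splice, lt_irrefl, if_false]
  exact inter_subset_right

theorem isNowhereDense_preimage {φ : SeqSpace X → X}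
    (hφ : ∀ x : SeqSpace X, φ x ∈ ⋂ n, ((x.1 n).1 : Set X)) {N : Set X}
    (hN : IsNowhereDense N) : IsNowhereDense (φ ⁻¹' N) := by
  obtain ⟨hDo, hDd⟩ := isClosed_isNowhereDense_iff_compl.1 ⟨isClosed_closure, hN.closure⟩
  have hE : IsClosed (enters (closure N)ᶜ)ᶜ ∧ IsNowhereDense (enters (closure N)ᶜ)ᶜ :=
    isClosed_isNowhereDense_iff_compl.2 <| by
      rw [compl_compl]
      exact ⟨isOpen_enters _, dense_enters hDo hDd⟩
  refine hE.2.mono fun x hx ↦ ?_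
  rintro ⟨n, hn⟩
  exact hn (mem_iInter.1 (hφ x) n) (subset_closure hx)

end SeqSpace

theorem stmt2 (X : Type) [TopologicalSpace X]
    (φ : SeqSpace X → X) (hφ : ∀ x : SeqSpace X, φ x ∈ ⋂ n, ((x.1 n).1 : Set X))
    (M : Set X) (hM : IsMeagre M) :
    IsMeagre (φ ⁻¹' M) :=
  hM.preimage_of_forall_isNowhereDense_preimage fun _ hN ↦ SeqSpace.isNowhereDense_preimage hφ hN
end

section
/- Every non-meager subset of the Ellentuck space has cardinality continuum (2^ℵ₀). -/
open Set Topology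

/-- The points of the Ellentuck space: infinite subsets of `ω`. -/
abbrev EllPt : Type := {A : Set ℕ // A.Infinite}

/-- The basic set `[a, A] = {B : a ⊑ B ⊆ a ∪ A}`, where `a ⊑ B` means `a` is an
initial segment of `B` (i.e. `a ⊆ B` and every element of `B \ a` exceeds every
element of `a`). -/
def EBasic (a : Finset ℕ) (A : EllPt) : Set EllPt :=
  {B | ↑a ⊆ B.1 ∧ B.1 ⊆ ↑a ∪ A.1 ∧ ∀ m ∈ a, ∀ n ∈ B.1, n ∉ a → m < n}

/-- The Ellentuck topology, generated by the basic sets `[a, A]`. -/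
instance (priority := high) EllentuckSpace : TopologicalSpace EllPt :=
  TopologicalSpace.generateFrom {s | ∃ a A, s = EBasic a A}

/-!
If `S` is not meagre, it is not nowhere dense, so some basic set `[a, A]` lies in the closure
of `S`; since the sets `[a, B]` with `B ⊆ A` are open, each of them meets `S`. Now `A`
carries continuum many pairwise almost disjoint infinite subsets `B_x` (the branches of the
binary tree, coded into `A`), and a point of `S ∩ [a, B_x] ∩ [a, B_y]` would be an infinite
subset of the finite set `a ∪ (B_x ∩ B_y)`. So choosing one point of `S` in each `[a, B_x]`
gives continuum many distinct points of `S`.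
-/

def branchPrefixes (x : ℕ → Bool) : Set (List Bool) :=
  range fun n => (List.range n).map x

lemma branchPrefixes_infinite (x : ℕ → Bool) : (branchPrefixes x).Infinite :=
  infinite_range_of_injective fun n m h => by simpa using congrArg List.length h

lemma branchPrefixes_inter_finite {x y : ℕ → Bool} (hxy : x ≠ y) :
    (branchPrefixes x ∩ branchPrefixes y).Finite := by
  obtain ⟨i, hi⟩ := Function.ne_iff.mp hxy
  refine ((finite_Iic i).image fun n => (List.range n).map x).subset ?_
  rintro _ ⟨⟨n, rfl⟩, m, hnm⟩
  have hmn : m = n := by simpa using congrArg List.length hnm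
  subst hmn
  refine ⟨m, mem_Iic.mpr (not_lt.mp fun him => hi ?_), rfl⟩
  simpa [him] using (congrArg (·[i]?) hnm).symm

theorem Set.Infinite.exists_almostDisjoint_family {α : Type*} {A : Set α} (hA : A.Infinite) :
    ∃ F : (ℕ → Bool) → Set α, (∀ x, F x ⊆ A) ∧ (∀ x, (F x).Infinite) ∧
      Pairwise fun x y => (F x ∩ F y).Finite := by
  set e : List Bool → α := fun l => hA.natEmbedding A (Encodable.encode l)
  have he : Function.Injective e := fun l l' h =>
    Encodable.encode_injective ((hA.natEmbedding A).injective (Subtype.val_injective h))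
  refine ⟨fun x => e '' branchPrefixes x, ?_, fun x => ?_, fun x y hxy => ?_⟩
  · rintro x _ ⟨l, -, rfl⟩
    exact (hA.natEmbedding A _).2
  · exact (branchPrefixes_infinite x).image he.injOn
  · show (e '' _ ∩ e '' _).Finite
    rw [← image_inter he]
    exact (branchPrefixes_inter_finite hxy).image e

namespace EllPt

noncomputable def diff (B : EllPt) (a : Finset ℕ) : EllPt :=
  ⟨B.1 \ a, B.2.sdiff a.finite_toSet⟩

variable {a : Finset ℕ} {A B : EllPt}

lemma isOpen_eBasic (a : Finset ℕ) (A : EllPt) : IsOpen (EBasic a A) :=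
  TopologicalSpace.isOpen_generateFrom_of_mem ⟨a, A, rfl⟩

lemma eBasic_mono (h : A.1 ⊆ B.1) : EBasic a A ⊆ EBasic a B :=
  fun _ ⟨h1, h2, h3⟩ => ⟨h1, h2.trans (union_subset_union_right _ h), h3⟩

lemma eBasic_nonempty (a : Finset ℕ) (A : EllPt) : (EBasic a A).Nonempty := by
  set N := a.sup id
  have hT : (A.1 \ Iic N).Infinite := A.2.sdiff (finite_Iic N)
  refine ⟨⟨a ∪ (A.1 \ Iic N), hT.mono subset_union_right⟩, subset_union_left,
    union_subset_union_right _ sdiff_subset, ?_⟩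
  rintro m hm n (hn | ⟨-, hn⟩) hna
  · exact absurd hn hna
  · exact (Finset.le_sup (f := id) hm).trans_lt (not_le.mp hn)

lemma mem_eBasic_diff (h₁ : ↑a ⊆ B.1) (h₃ : ∀ m ∈ a, ∀ n ∈ B.1, n ∉ a → m < n) :
    B ∈ EBasic a (B.diff a) :=
  ⟨h₁, fun n hn => (em (n ∈ a)).imp id fun hna => ⟨hn, hna⟩, h₃⟩

lemma eBasic_diff_subset_of_mem (h : B ∈ EBasic a A) : EBasic a (B.diff a) ⊆ EBasic a A :=
  fun _ ⟨h₁, h₂, h₃⟩ => ⟨h₁, fun _ hn => (h₂ hn).elim Or.inl fun hn' =>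
    (h.2.1 hn'.1).imp_left fun hna => absurd hna hn'.2, h₃⟩

lemma eBasic_diff_subset_eBasic_diff {b : Finset ℕ} (hab : a ⊆ b) (hb : ↑b ⊆ B.1)
    (ha : B ∈ EBasic a (B.diff a)) : EBasic b (B.diff b) ⊆ EBasic a (B.diff a) := by
  rintro C ⟨hC₁, hC₂, -⟩
  have hCB : C.1 ⊆ B.1 := fun n hn => (hC₂ hn).elim (fun h => hb h) (·.1)
  refine ⟨(Finset.coe_subset.mpr hab).trans hC₁, fun n hn => ?_, fun m hm n hn hna =>
    ha.2.2 m hm n (hCB hn) hna⟩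
  exact (em (n ∈ a)).imp id fun hna => ⟨hCB hn, hna⟩

lemma exists_mem_eBasic_diff_subset {U : Set EllPt} (hU : IsOpen U) (hB : B ∈ U) :
    ∃ a : Finset ℕ, B ∈ EBasic a (B.diff a) ∧ EBasic a (B.diff a) ⊆ U := by
  induction hU generalizing B with
  | basic s hs =>
    obtain ⟨a, A, rfl⟩ := hs
    exact ⟨a, mem_eBasic_diff hB.1 hB.2.2, eBasic_diff_subset_of_mem hB⟩
  | univ => exact ⟨∅, mem_eBasic_diff (by simp) (by simp), subset_univ _⟩
  | inter u v _ _ ihu ihv =>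
    obtain ⟨a₁, h₁, s₁⟩ := ihu hB.1
    obtain ⟨a₂, h₂, s₂⟩ := ihv hB.2
    have h : B ∈ EBasic (a₁ ∪ a₂) (B.diff (a₁ ∪ a₂)) := by
      refine mem_eBasic_diff (by simpa using union_subset h₁.1 h₂.1) fun m hm n hn hna => ?_
      rw [Finset.mem_union, not_or] at hna
      exact (Finset.mem_union.mp hm).elim (h₁.2.2 m · n hn hna.1) (h₂.2.2 m · n hn hna.2)
    exact ⟨a₁ ∪ a₂, h, subset_inter
      (s₁.trans' (eBasic_diff_subset_eBasic_diff Finset.subset_union_left h.1 h₁))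
      (s₂.trans' (eBasic_diff_subset_eBasic_diff Finset.subset_union_right h.1 h₂))⟩
  | sUnion 𝒮 _ ih =>
    obtain ⟨t, ht, hBt⟩ := hB
    obtain ⟨a, hm, hs⟩ := ih t ht hBt
    exact ⟨a, hm, hs.trans (subset_sUnion_of_mem ht)⟩

lemma isNowhereDense_of_forall_exists_disjoint {S : Set EllPt}
    (H : ∀ (a : Finset ℕ) (A : EllPt), ∃ B : EllPt, B.1 ⊆ A.1 ∧ Disjoint (EBasic a B) S) : IsNowhereDense S := by
  refine eq_empty_iff_forall_notMem.mpr fun B hB => ?_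
  obtain ⟨a, -, hsub⟩ := exists_mem_eBasic_diff_subset isOpen_interior hB
  obtain ⟨B', hB', hdisj⟩ := H a (B.diff a)
  obtain ⟨C, hC⟩ := eBasic_nonempty a B'
  exact (hdisj.closure_right (isOpen_eBasic a B')).notMem_of_mem_left hC
    (interior_subset (hsub (eBasic_mono hB' hC)))

lemma exists_eBasic_forall_inter_nonempty {S : Set EllPt} (hS : ¬ IsMeagre S) :
    ∃ (a : Finset ℕ) (A : EllPt), ∀ B : EllPt, B.1 ⊆ A.1 → (EBasic a B ∩ S).Nonempty := by
  by_contra! h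
  exact hS (isNowhereDense_of_forall_exists_disjoint fun a A =>
    (h a A).imp fun B hB => ⟨hB.1, disjoint_iff_inter_eq_empty.mpr hB.2⟩).isMeagre

lemma disjoint_eBasic_of_inter_finite (h : (A.1 ∩ B.1).Finite) :
    Disjoint (EBasic a A) (EBasic a B) := by
  refine disjoint_left.mpr fun C hA hB => C.2 ((a.finite_toSet.union h).subset fun n hn => ?_)
  rcases hA.2.1 hn with hna | hnA
  · exact Or.inl hna
  · exact (hB.2.1 hn).imp_right (⟨hnA, ·⟩)

end EllPt

/-- Every non-meager subset of the Ellentuck space has cardinality continuum. -/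
theorem stmt7 (S : Set EllPt) (hS : ¬ IsMeagre S) :
    Cardinal.mk S = Cardinal.continuum := by
  obtain ⟨a, A, hS⟩ := EllPt.exists_eBasic_forall_inter_nonempty hS
  obtain ⟨F, hFA, hF, hFdisj⟩ := A.2.exists_almostDisjoint_family
  choose C hCF hCS using fun x => hS ⟨F x, hF x⟩ (hFA x)
  have hC : Function.Injective fun x => (⟨C x, hCS x⟩ : S) := fun x y hxy => by_contra fun hne =>
    (EllPt.disjoint_eBasic_of_inter_finite (hFdisj hne)).ne_of_mem (hCF x) (hCF y)
      (congrArg (·.1) hxy)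
  refine le_antisymm ?_ ?_
  · calc Cardinal.mk S ≤ Cardinal.mk (Set ℕ) :=
          (Cardinal.mk_set_le S).trans (Cardinal.mk_subtype_le _)
      _ = Cardinal.continuum := Cardinal.mk_set_nat
  · simpa using Cardinal.mk_le_of_injective hC
end

section
/- A subset X of the Ellentuck space is nowhere dense if and only if it is Ramsey null: for every nonempty basic set [a, A] there exists B ∈ [A]^ω such that [a, B] ∩ X = ∅. -/
open Set Topology

/-!
Basic sets are open and nonempty, so the content is that a dense open set `D` contains some
`[a, C]` with `C ⊆ A`. This is the combinatorial-forcing argument of Galvin–Prikry and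
Ellentuck. Say that `B` rejects `b` if `[b, C] ⊄ D` for every `C ⊆ B`. If `B` rejects `b`, a
fusion argument shrinks `B` to some `B'` that rejects `b ∪ {n}` above `n` for every `n ∈ B'`.
Suppose now that `A` rejects `a`. A second fusion produces `B ⊆ A` such that `a ∪ s` is
rejected by the part of `B` above `s`, for every finite `s ⊆ B`. By density some `x ∈ [a, B]`
lies in `D`, and by openness `[b, x \ b] ⊆ D` for an initial segment `b ⊇ a` of `x`. With
`s = b \ a`, this contradicts the choice of `B`.
-/

namespace Ellentuck

def tail (A : EllPt) (n : ℕ) : EllPt := ⟨A.1 \ Iic n, A.2.sdiff (finite_Iic n)⟩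

@[simp]
lemma mem_tail {A : EllPt} {n m : ℕ} : m ∈ (tail A n).1 ↔ m ∈ A.1 ∧ n < m := by
  simp [tail]

lemma tail_subset (A : EllPt) (n : ℕ) : (tail A n).1 ⊆ A.1 := sdiff_subset

lemma tail_mono {A B : EllPt} (h : A.1 ⊆ B.1) (n : ℕ) : (tail A n).1 ⊆ (tail B n).1 :=
  sdiff_subset_sdiff_left h

def diff (x : EllPt) (b : Finset ℕ) : EllPt := ⟨x.1 \ ↑b, x.2.sdiff b.finite_toSet⟩

lemma isOpen_basic (a : Finset ℕ) (A : EllPt) : IsOpen (EBasic a A) :=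
  TopologicalSpace.isOpen_generateFrom_of_mem ⟨a, A, rfl⟩

lemma basic_nonempty (a : Finset ℕ) (A : EllPt) : (EBasic a A).Nonempty :=
  ⟨⟨↑a ∪ (tail A (a.sup id)).1, (tail A _).2.mono subset_union_right⟩,
    subset_union_left, union_subset_union_right _ (tail_subset _ _),
    fun _ hm _ hn hna =>
      (Finset.le_sup (f := id) hm).trans_lt (mem_tail.1 (hn.resolve_left hna)).2⟩

lemma basic_mono {a : Finset ℕ} {A B : EllPt} (h : B.1 ⊆ A.1) : EBasic a B ⊆ EBasic a A :=
  fun _ hy => ⟨hy.1, hy.2.1.trans (union_subset_union_right _ h), hy.2.2⟩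

lemma mem_basic_insert {b : Finset ℕ} {B x : EllPt} {m : ℕ} (hx : x ∈ EBasic b B)
    (hm : IsLeast (x.1 \ ↑b) m) : x ∈ EBasic (insert m b) (tail B m) := by
  obtain ⟨⟨hmx, -⟩, hmin⟩ := hm
  refine ⟨?_, fun y hy => ?_, fun k hk y hy hyk => ?_⟩
  · rw [Finset.coe_insert]
    exact insert_subset hmx hx.1
  · by_cases hy' : y ∈ insert m b
    · exact Or.inl hy'
    · rw [Finset.mem_insert, not_or] at hy'
      exact Or.inr (mem_tail.2
        ⟨(hx.2.1 hy).resolve_left hy'.2, (hmin ⟨hy, hy'.2⟩).lt_of_ne' hy'.1⟩)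
  · rw [Finset.mem_insert, not_or] at hyk
    rcases Finset.mem_insert.1 hk with rfl | hk
    · exact (hmin ⟨hy, hyk.2⟩).lt_of_ne' hyk.1
    · exact hx.2.2 k hk y hy hyk.2

lemma basic_diff_subset {a b : Finset ℕ} {A x : EllPt} (hx : x ∈ EBasic a A) (hab : a ⊆ b)
    (hb : ↑b ⊆ x.1) : EBasic b (diff x b) ⊆ EBasic a A := by
  intro y hy
  have hyx : y.1 ⊆ x.1 := fun z hz => (hy.2.1 hz).elim (fun h => hb h) fun h => h.1
  exact ⟨(Finset.coe_subset.2 hab).trans hy.1, hyx.trans hx.2.1,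
    fun m hm z hz hza => hx.2.2 m hm z (hyx hz) hza⟩

lemma mem_basic_union {a c : Finset ℕ} {A C x : EllPt} (ha : x ∈ EBasic a A)
    (hc : x ∈ EBasic c C) : x ∈ EBasic (a ∪ c) (diff x (a ∪ c)) := by
  refine ⟨by rw [Finset.coe_union]; exact union_subset ha.1 hc.1, fun y hy => ?_,
    fun m hm y hy hyac => ?_⟩
  · by_cases h : y ∈ a ∪ c
    · exact Or.inl h
    · exact Or.inr ⟨hy, h⟩
  · rw [Finset.mem_union, not_or] at hyac
    rcases Finset.mem_union.1 hm with hm | hm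
    exacts [ha.2.2 m hm y hy hyac.1, hc.2.2 m hm y hy hyac.2]

lemma isTopologicalBasis_basic :
    TopologicalSpace.IsTopologicalBasis {s : Set EllPt | ∃ a A, s = EBasic a A} := by
  refine ⟨?_, ?_, rfl⟩
  · rintro _ ⟨a, A, rfl⟩ _ ⟨c, C, rfl⟩ x ⟨ha, hc⟩
    have hx := mem_basic_union ha hc
    exact ⟨_, ⟨_, _, rfl⟩, hx,
      subset_inter (basic_diff_subset ha Finset.subset_union_left hx.1)
        (basic_diff_subset hc Finset.subset_union_right hx.1)⟩
  · exact sUnion_eq_univ_iff.2 fun x => ⟨EBasic ∅ x, ⟨∅, x, rfl⟩, by simp [EBasic]⟩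

lemma exists_basic_subset_of_mem_isOpen {D : Set EllPt} (hD : IsOpen D) {x : EllPt}
    (hxD : x ∈ D) {a : Finset ℕ} {A : EllPt} (hx : x ∈ EBasic a A) :
    ∃ b : Finset ℕ, a ⊆ b ∧ x ∈ EBasic b (diff x b) ∧ EBasic b (diff x b) ⊆ D := by
  obtain ⟨_, ⟨c, C, rfl⟩, hxc, hcD⟩ := isTopologicalBasis_basic.isOpen_iff.1 hD x hxD
  have hx' := mem_basic_union hx hxc
  exact ⟨a ∪ c, Finset.subset_union_left, hx',
    (basic_diff_subset hxc Finset.subset_union_right hx'.1).trans hcD⟩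

section Fusion

variable (Q : Finset ℕ → EllPt → Prop) {A : EllPt}

lemma exists_fusion_seq (h0 : Q ∅ A)
    (hstep : ∀ t E, Q t E →
      ∃ n ∈ E.1, ∃ E' : EllPt, E'.1 ⊆ (tail E n).1 ∧ Q (insert n t) E') :
    ∃ (ν : ℕ → ℕ) (t : ℕ → Finset ℕ) (E : ℕ → EllPt), E 0 = A ∧
      ∀ k, Q (t k) (E k) ∧ ν k ∈ (E k).1 ∧ t (k + 1) = insert (ν k) (t k) ∧
        (E (k + 1)).1 ⊆ (tail (E k) (ν k)).1 := by
  let S := {p : Finset ℕ × EllPt // Q p.1 p.2}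
  choose n hn E' hE' hQ using fun p : S => hstep p.1.1 p.1.2 p.2
  let next : S → S := fun p => ⟨(insert (n p) p.1.1, E' p), hQ p⟩
  let f : ℕ → S := fun k => next^[k] ⟨(∅, A), h0⟩
  have hf : ∀ k, f (k + 1) = next (f k) := fun k => Function.iterate_succ_apply' next k _
  refine ⟨fun k => n (f k), fun k => (f k).1.1, fun k => (f k).1.2, rfl,
    fun k => ⟨(f k).2, hn _, ?_, ?_⟩⟩
  · simp only [hf, next]
  · simp only [hf, next]
    exact hE' _

/-- `B` is the diagonal `{ν 0 < ν 1 < ⋯}` of the fusion sequence; for a finite `s ⊆ B`,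
`t` and `E` are the data at the first stage `k` with `s` below `ν k`. -/
lemma exists_fusion (h0 : Q ∅ A)
    (hstep : ∀ t E, Q t E →
      ∃ n ∈ E.1, ∃ E' : EllPt, E'.1 ⊆ (tail E n).1 ∧ Q (insert n t) E') :
    ∃ B : EllPt, B.1 ⊆ A.1 ∧ ∀ s : Finset ℕ, ↑s ⊆ B.1 →
      ∃ t E, s ⊆ t ∧ Q t E ∧ ∀ y ∈ B.1, (∀ m ∈ s, m < y) → y ∈ E.1 := by
  obtain ⟨ν, t, E, rfl, h⟩ := exists_fusion_seq Q h0 hstep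
  choose hQ hνE ht hE using h
  have hE_anti : Antitone fun k => (E k).1 :=
    antitone_nat_of_succ_le fun k => (hE k).trans (tail_subset _ _)
  have hν : StrictMono ν :=
    strictMono_nat_of_lt_succ fun k => (mem_tail.1 (hE k (hνE (k + 1)))).2
  have hνt : ∀ {i k}, i < k → ν i ∈ t k := by
    intro i k hik
    induction k, hik using Nat.le_induction with
    | base => simp [ht]
    | succ k _ ih => rw [ht]; exact Finset.mem_insert_of_mem ih
  refine ⟨⟨range ν, infinite_range_of_injective hν.injective⟩, ?_, fun s hs => ?_⟩
  · rintro _ ⟨k, rfl⟩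
    exact hE_anti (Nat.zero_le k) (hνE k)
  · have hex : ∃ k, ∀ m ∈ s, m < ν k := ⟨s.sup id + 1, fun m hm =>
      (Nat.lt_succ_of_le (Finset.le_sup (f := id) hm)).trans_le (hν.id_le _)⟩
    classical
    refine ⟨t (Nat.find hex), E (Nat.find hex), fun m hm => ?_, hQ _, ?_⟩
    · obtain ⟨i, rfl⟩ := hs hm
      exact hνt (hν.lt_iff_lt.1 (Nat.find_spec hex _ hm))
    · rintro _ ⟨j, rfl⟩ hj
      exact hE_anti (Nat.find_min' hex hj) (hνE j)

end Fusion

section Rejects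

def Rejects (D : Set EllPt) (b : Finset ℕ) (B : EllPt) : Prop :=
  ∀ C : EllPt, C.1 ⊆ B.1 → ¬ EBasic b C ⊆ D

variable {D : Set EllPt}

lemma not_rejects_iff {b : Finset ℕ} {B : EllPt} :
    ¬ Rejects D b B ↔ ∃ C : EllPt, C.1 ⊆ B.1 ∧ EBasic b C ⊆ D := by
  simp [Rejects]

lemma Rejects.mono {b : Finset ℕ} {B B' : EllPt} (hB : Rejects D b B) (h : B'.1 ⊆ B.1) :
    Rejects D b B' :=
  fun C hC => hB C (hC.trans h)

lemma Rejects.exists_insert {b : Finset ℕ} {B : EllPt} (hB : Rejects D b B) :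
    ∃ n ∈ B.1, ∃ B₁ : EllPt, B₁.1 ⊆ (tail B n).1 ∧ Rejects D (insert n b) B₁ := by
  by_contra! hacc
  -- If every one-point extension is accepted, fusing the witnesses makes `B` accept `b`.
  obtain ⟨B', hB'B, hB'⟩ := exists_fusion
      (fun t E => E.1 ⊆ B.1 ∧ ∀ m ∈ t, EBasic (insert m b) E ⊆ D) ⟨subset_rfl, by simp⟩ <| by
    rintro t E ⟨hEB, hE⟩
    obtain ⟨n, hn⟩ := E.2.nonempty
    obtain ⟨C, hCE, hCD⟩ := not_rejects_iff.1 (hacc n (hEB hn) (tail E n) (tail_mono hEB n))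
    refine ⟨n, hn, C, hCE, hCE.trans ((tail_subset _ _).trans hEB), fun m hm => ?_⟩
    rcases Finset.mem_insert.1 hm with rfl | hm
    · exact hCD
    · exact (basic_mono (hCE.trans (tail_subset _ _))).trans (hE m hm)
  refine hB B' hB'B fun x hx => ?_
  have hm := isLeast_csInf (x.2.sdiff b.finite_toSet).nonempty
  have hmB' : sInf (x.1 \ ↑b) ∈ B'.1 := (hx.2.1 hm.1.1).resolve_left hm.1.2
  obtain ⟨t, E, hmt, ⟨-, hE⟩, hB'E⟩ := hB' {sInf (x.1 \ ↑b)} (by simpa using hmB')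
  refine hE _ (hmt (Finset.mem_singleton_self _)) (basic_mono ?_ (mem_basic_insert hx hm))
  exact fun y hy => hB'E y (tail_subset _ _ hy) (by simpa using (mem_tail.1 hy).2)

lemma Rejects.exists_forall_insert {b : Finset ℕ} {B : EllPt} (hB : Rejects D b B) :
    ∃ B' : EllPt, B'.1 ⊆ B.1 ∧ ∀ n ∈ B'.1, Rejects D (insert n b) (tail B' n) := by
  obtain ⟨B', hB'B, hB'⟩ := exists_fusion
      (fun t E => Rejects D b E ∧ ∀ m ∈ t, Rejects D (insert m b) E) ⟨hB, by simp⟩ <| by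
    rintro t E ⟨hE, ht⟩
    obtain ⟨n, hn, E₁, hE₁, hrej⟩ := hE.exists_insert
    have hE₁E : E₁.1 ⊆ E.1 := hE₁.trans (tail_subset _ _)
    refine ⟨n, hn, E₁, hE₁, hE.mono hE₁E, fun m hm => ?_⟩
    rcases Finset.mem_insert.1 hm with rfl | hm
    · exact hrej
    · exact (ht m hm).mono hE₁E
  refine ⟨B', hB'B, fun n hn => ?_⟩
  obtain ⟨t, E, hnt, ⟨-, hE⟩, hB'E⟩ := hB' {n} (by simpa using hn)
  refine (hE n (hnt (Finset.mem_singleton_self n))).mono fun y hy => ?_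
  exact hB'E y (tail_subset _ _ hy) (by simpa using (mem_tail.1 hy).2)

lemma exists_forall_insert_rejects (S : Finset (Finset ℕ)) {B : EllPt}
    (hS : ∀ c ∈ S, Rejects D c B) :
    ∃ F : EllPt, F.1 ⊆ B.1 ∧
      ∀ c ∈ S, ∀ n ∈ F.1, Rejects D (insert n c) (tail F n) := by
  induction S using Finset.induction_on with
  | empty => exact ⟨B, subset_rfl, by simp⟩
  | insert c S _ ih =>
    obtain ⟨F, hFB, hF⟩ := ih fun c' hc' => hS c' (Finset.mem_insert_of_mem hc')
    obtain ⟨F', hF'F, hF'⟩ :=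
      ((hS c (Finset.mem_insert_self c S)).mono hFB).exists_forall_insert
    refine ⟨F', hF'F.trans hFB, fun c' hc' n hn => ?_⟩
    rcases Finset.mem_insert.1 hc' with rfl | hc'
    · exact hF' n hn
    · exact (hF c' hc' n (hF'F hn)).mono (tail_mono hF'F n)

theorem exists_basic_subset_of_isOpen_of_dense (hDo : IsOpen D) (hDd : Dense D)
    (a : Finset ℕ) (A : EllPt) : ∃ C : EllPt, C.1 ⊆ A.1 ∧ EBasic a C ⊆ D := by
  by_contra! hA
  obtain ⟨B, hBA, hB⟩ := exists_fusion (fun t E => ∀ s ⊆ t, Rejects D (a ∪ s) E)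
      (fun s hs => by rwa [Finset.subset_empty.1 hs, Finset.union_empty]) <| by
    intro t E hE
    obtain ⟨F, hFE, hF⟩ := exists_forall_insert_rejects (t.powerset.image (a ∪ ·))
      (B := E) (by simpa using hE)
    obtain ⟨n, hn⟩ := F.2.nonempty
    refine ⟨n, hFE hn, tail F n, tail_mono hFE n, fun s hs => ?_⟩
    by_cases hns : n ∈ s
    · rw [← Finset.insert_erase hns, Finset.union_insert]
      have hs' : s.erase n ⊆ t := Finset.subset_insert_iff.1 hs
      exact hF _ (Finset.mem_image_of_mem _ (Finset.mem_powerset.2 hs')) n hn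
    · have hst : s ⊆ t := by rwa [Finset.subset_insert_iff, Finset.erase_eq_of_notMem hns] at hs
      exact (hE s hst).mono ((tail_subset _ _).trans hFE)
  obtain ⟨x, hxB, hxD⟩ := hDd.inter_open_nonempty _ (isOpen_basic a B) (basic_nonempty a B)
  obtain ⟨b, hab, hxb, hbD⟩ := exists_basic_subset_of_mem_isOpen hDo hxD hxB
  have hxB' : ∀ {y}, y ∈ x.1 → y ∉ a → y ∈ B.1 :=
    fun hy hya => (hxB.2.1 hy).resolve_left hya
  obtain ⟨t, E, hst, hE, hBE⟩ := hB (b \ a) fun y hy =>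
    hxB' (hxb.1 (Finset.sdiff_subset hy)) (Finset.mem_sdiff.1 hy).2
  refine hE (b \ a) hst (diff x b) (fun y hy => hBE y ?_ ?_) ?_
  · exact hxB' hy.1 fun hya => hy.2 (hab hya)
  · exact fun m hm => hxb.2.2 m (Finset.sdiff_subset hm) y hy.1 hy.2
  · rwa [Finset.union_sdiff_of_subset hab]

end Rejects

end Ellentuck

open Ellentuck in
/-- A subset of the Ellentuck space is nowhere dense iff it is Ramsey null:
for every nonempty basic set `[a, A]` there is `B ∈ [A]^ω` with `[a, B] ∩ X = ∅`. -/
theorem stmt12 (X : Set EllPt) :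
    IsNowhereDense X ↔
      ∀ (a : Finset ℕ) (A : EllPt), (EBasic a A).Nonempty →
        ∃ B : EllPt, B.1 ⊆ A.1 ∧ EBasic a B ∩ X = ∅ := by
  constructor
  · intro hX a A _
    obtain ⟨C, hCA, hC⟩ := exists_basic_subset_of_isOpen_of_dense isClosed_closure.isOpen_compl
      (interior_eq_empty_iff_dense_compl.1 hX) a A
    exact ⟨C, hCA, eq_empty_of_forall_notMem fun y hy => hC hy.1 (subset_closure hy.2)⟩
  · intro h
    refine eq_empty_of_forall_notMem fun x hx => ?_
    obtain ⟨_, ⟨a, A, rfl⟩, hxA, hA⟩ :=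
      isTopologicalBasis_basic.isOpen_iff.1 isOpen_interior x hx
    obtain ⟨B, hBA, hBX⟩ := h a A ⟨x, hxA⟩
    obtain ⟨y, hy⟩ := basic_nonempty a B
    have hyX : y ∈ closure X := interior_subset (hA (basic_mono hBA hy))
    exact (mem_closure_iff.1 hyX _ (isOpen_basic a B) hy).ne_empty hBX
end

section
/- Louveau–Simpson theorem: if ℱ is a point-finite family of Ramsey null subsets of [ω]^ω such that the union of every subfamily of ℱ is completely Ramsey, then ⋃ℱ is Ramsey null. -/
open Set Topology

/-- `X` is Ramsey null: for every basic set `[a, A]` there is `B ∈ [A]^ω` with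
`[a, B] ∩ X = ∅`. -/
def RamseyNull (X : Set EllPt) : Prop :=
  ∀ (a : Finset ℕ) (A : EllPt), ∃ B : EllPt, B.1 ⊆ A.1 ∧ EBasic a B ∩ X = ∅

/-- `X` is completely Ramsey: for every basic set `[a, A]` there is `B ∈ [A]^ω`
with `[a, B] ⊆ X` or `[a, B] ∩ X = ∅`. -/
def CompletelyRamsey (X : Set EllPt) : Prop :=
  ∀ (a : Finset ℕ) (A : EllPt), ∃ B : EllPt, B.1 ⊆ A.1 ∧
    (EBasic a B ⊆ X ∨ EBasic a B ∩ X = ∅)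

/-!
Call `X` null below a condition `p` if every extension `q` of `p` has a basic set `[q.b, B]`,
`B ⊆ q.C`, missing `X`. By fusion these sets form a σ-ideal, and by complete Ramseyness each
subunion `⋃ i ∈ E, F i` is either null below `p` or contains a condition below `p`.

A subunion covering a condition needs at least `𝔠` indices. Otherwise, if `E` could not be split
into two parts neither of which is null, the subsets of `E` with null subunion would form a
σ-complete prime ideal containing all singletons on a set of size `≤ 𝔠`, which is impossible
(Ulam). So splittings exist everywhere; iterating them gives a Cantor scheme whose branches shrink
to points, and by point-finiteness each branch keeps an index of its own.

Hence every subunion with fewer than `𝔠` indices is null below every condition. If the whole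
union contained a condition `p`, a Bernstein construction along the `𝔠` basic sets `[p.b, B]`
would give a subunion meeting and missing each of them, contradicting its complete Ramseyness.
-/

open Cardinal Function

universe u

theorem Nat.exists_seq_of_forall_exists {α : Type*} (P : α → Prop) (R : ℕ → α → α → Prop)
    (h : ∀ k a, P a → ∃ b, P b ∧ R k a b) {a₀ : α} (h₀ : P a₀) :
    ∃ f : ℕ → α, ∀ k, P (f k) ∧ R k (f k) (f (k + 1)) := by
  choose g hg using h
  let f : ℕ → {a // P a} :=
    fun k => Nat.rec ⟨a₀, h₀⟩ (fun k a => ⟨g k a a.2, (hg k a a.2).1⟩) k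
  exact ⟨fun k => (f k).1, fun k => ⟨(f k).2, (hg k _ (f k).2).2⟩⟩

theorem WellFoundedLT.exists_forall_fix {σ β : Type*} [LT σ] [WellFoundedLT σ]
    (P : (γ : σ) → ((δ : σ) → δ < γ → β) → β → Prop) (h : ∀ γ prev, ∃ v, P γ prev v) :
    ∃ f : σ → β, ∀ γ, P γ (fun δ _ => f δ) (f γ) := by
  choose g hg using h
  refine ⟨wellFounded_lt.fix g, fun γ => ?_⟩
  rw [wellFounded_lt.fix_eq]
  exact hg _ _

theorem Set.nonempty_iInter_of_antitone_of_finite {α : Type*} {H : ℕ → Set α}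
    (hH : Antitone H) (hfin : (H 0).Finite) (hne : ∀ k, (H k).Nonempty) :
    (⋂ k, H k).Nonempty := by
  have hfin' (k : ℕ) : (H k).Finite := hfin.subset (hH k.zero_le)
  obtain ⟨n, hn⟩ := WellFoundedLT.antitone_chain_condition
    (f := fun k => (H k).ncard) fun k m hkm => ncard_le_ncard (hH hkm) (hfin' k)
  obtain ⟨x, hx⟩ := hne n
  refine ⟨x, mem_iInter.2 fun m => ?_⟩
  rcases le_total n m with h | h
  · rwa [eq_of_subset_of_ncard_le (hH h) (hn m h).le (hfin' n)]
  · exact hH h hx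

def cantorBranch {S : Type*} (s₀ : S) (child : S → Bool → S) (c : ℕ → Bool) : ℕ → S
  | 0 => s₀
  | k + 1 => child (cantorBranch s₀ child c k) (c k)

section CantorBranch

variable {S : Type*} (s₀ : S) (child : S → Bool → S)

theorem cantorBranch_congr {c c' : ℕ → Bool} {k : ℕ} (h : ∀ m < k, c m = c' m) :
    cantorBranch s₀ child c k = cantorBranch s₀ child c' k := by
  induction k with
  | zero => rfl
  | succ k ih => rw [cantorBranch, cantorBranch, ih fun m hm => h m (by omega), h k k.lt_succ_self]

theorem injective_of_forall_mem_cantorBranch {J : Type*} (E : S → Set J)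
    (hE : ∀ s, Disjoint (E (child s false)) (E (child s true))) {η : (ℕ → Bool) → J}
    (hη : ∀ c k, η c ∈ E (cantorBranch s₀ child c k)) : Injective η := by
  classical
  intro c c' hcc'
  by_contra hne
  have hex : ∃ k, c k ≠ c' k := Function.ne_iff.1 hne
  have hagree := cantorBranch_congr s₀ child (k := Nat.find hex)
    fun m hm => not_not.1 (Nat.find_min hex hm)
  have h := hη c (Nat.find hex + 1)
  have h' := hη c' (Nat.find hex + 1)
  rw [cantorBranch, hagree, hcc'] at h
  rw [cantorBranch, Bool.eq_not_of_ne (Nat.find_spec hex).symm] at h'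
  have hE' (s : S) (b : Bool) : Disjoint (E (child s b)) (E (child s !b)) := by
    cases b
    exacts [hE s, (hE s).symm]
  exact (hE' _ _).ne_of_mem h h' rfl

end CantorBranch

theorem sigma_prime_ideal_contains_of_mk_le_continuum {α : Type u} {E : Set α} (hE : #E ≤ 𝔠)
    {D : Set α → Prop} (h_empty : D ∅) (h_singleton : ∀ a ∈ E, D {a})
    (h_union : ∀ S T, D S → D T → D (S ∪ T))
    (h_iUnion : ∀ V : ℕ → Set α, (∀ n, D (V n)) → D (⋃ n, V n))
    (h_prime : ∀ S ⊆ E, D S ∨ D (E \ S)) : D E := by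
  classical
  obtain ⟨g, hg⟩ : ∃ g : α → ℕ → Bool, InjOn g E := by
    have hcard : #E ≤ #(ULift.{u} (ℕ → Bool)) := by simpa using hE
    obtain ⟨e⟩ := hcard
    refine ⟨fun a => if h : a ∈ E then (e ⟨a, h⟩).down else default, fun a ha a' ha' haa' => ?_⟩
    simp only [dif_pos ha, dif_pos ha'] at haa'
    exact congrArg Subtype.val (e.injective (ULift.ext _ _ haa'))
  -- Each coordinate of `g` puts one half of `E` into `D`; removing these halves leaves at most
  -- one point of `E`.
  have hbit (n : ℕ) : ∃ b, D (E ∩ {a | g a n ≠ b}) := by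
    rcases h_prime (E ∩ {a | g a n = true}) inter_subset_left with h | h
    · exact ⟨false, by simpa using h⟩
    · refine ⟨true, ?_⟩
      convert h using 2
      ext a
      simp
  choose β hβ using hbit
  have hsub : (E ∩ {a | g a = β}).Subsingleton :=
    fun a ha a' ha' => hg ha.1 ha'.1 (ha.2.trans ha'.2.symm)
  have hcover : E = (⋃ n, E ∩ {a | g a n ≠ β n}) ∪ (E ∩ {a | g a = β}) := by
    ext a
    simp only [mem_union, mem_iUnion, mem_inter_iff, mem_ofPred_eq, funext_iff]
    by_cases ha : a ∈ E <;> simp [ha, ← not_forall, em']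
  rw [hcover]
  refine h_union _ _ (h_iUnion _ hβ) ?_
  rcases hsub.eq_empty_or_singleton with h | ⟨a, h⟩
  · rw [h]; exact h_empty
  · rw [h]; exact h_singleton a (h.symm.subset (mem_singleton a)).1

theorem exists_bernstein_subfamily {α ι σ : Type u} {κ : Cardinal.{u}} (hκ : ℵ₀ < κ)
    (hσ : #σ ≤ κ) {F : ι → Set α} (hpf : ∀ x, {i | x ∈ F i}.Finite) {S : σ → Set α}
    (hcov : ∀ s, S s ⊆ ⋃ i, F i)
    (havoid : ∀ s (E : Set ι), #E < κ → ∃ y ∈ S s, ∀ i ∈ E, y ∉ F i) :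
    ∃ E : Set ι, ∀ s, (S s ∩ ⋃ i ∈ E, F i).Nonempty ∧ (S s \ ⋃ i ∈ E, F i).Nonempty := by
  rcases isEmpty_or_nonempty σ with hσ₀ | hσ₀
  · exact ⟨∅, fun s => isEmptyElim s⟩
  obtain ⟨π, hπ⟩ : ∃ π : κ.ord.ToType → σ, Surjective π := by
    obtain ⟨e⟩ : #σ ≤ #κ.ord.ToType := by rwa [mk_ord_toType]
    exact ⟨invFun e, invFun_surjective e.injective⟩
  have hIio (γ : κ.ord.ToType) : #(Iio γ) < κ := by simpa using mk_Iio_lt γ (by simp)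
  -- Fewer than `κ` points and indices are chosen before stage `γ`, and each point lies in only
  -- finitely many `F i`, so `havoid` applies at every stage.
  have step : ∀ (γ : κ.ord.ToType) (prev : (δ : κ.ord.ToType) → δ < γ → α × α × ι),
      ∃ v : α × α × ι, v.1 ∈ S (π γ) ∧ v.2.1 ∈ S (π γ) ∧ v.1 ∈ F v.2.2 ∧ v.2.1 ∉ F v.2.2 ∧
        ∀ δ (h : δ < γ), v.2.1 ∉ F (prev δ h).2.2 ∧ (prev δ h).2.1 ∉ F v.2.2 := by
    intro γ prev
    obtain ⟨y, hyS, hy⟩ := havoid (π γ) (range fun δ : Iio γ => (prev δ δ.2).2.2)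
      (mk_range_le.trans_lt (hIio γ))
    have hD : #({i | y ∈ F i} ∪ ⋃ δ : Iio γ, {i | (prev δ δ.2).2.1 ∈ F i} : Set ι) < κ :=
      (mk_union_le _ _).trans_lt <| add_lt_of_lt hκ.le ((hpf y).lt_aleph0.trans hκ) <|
        (mk_iUnion_le _).trans_lt <| mul_lt_of_lt hκ.le (hIio γ) <|
          (ciSup_le' fun δ => (hpf _).lt_aleph0.le).trans_lt hκ
    obtain ⟨x, hxS, hx⟩ := havoid (π γ) _ hD
    obtain ⟨ε, hε⟩ := mem_iUnion.1 (hcov _ hxS)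
    exact ⟨(x, y, ε), hxS, hyS, hε, fun h => hx ε (Or.inl h) hε, fun δ hδ =>
      ⟨hy _ ⟨⟨δ, hδ⟩, rfl⟩, fun h => hx ε (Or.inr (mem_iUnion.2 ⟨⟨δ, hδ⟩, h⟩)) hε⟩⟩
  obtain ⟨f, hf⟩ := WellFoundedLT.exists_forall_fix _ step
  have hsep (β γ) : (f γ).2.1 ∉ F (f β).2.2 := by
    rcases lt_trichotomy β γ with h | rfl | h
    · exact ((hf γ).2.2.2.2 β h).1
    · exact (hf β).2.2.2.1
    · exact ((hf β).2.2.2.2 γ h).2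
  refine ⟨range fun γ => (f γ).2.2, fun s => ?_⟩
  obtain ⟨γ, rfl⟩ := hπ s
  refine ⟨⟨(f γ).1, (hf γ).1, mem_biUnion ⟨γ, rfl⟩ (hf γ).2.2.1⟩, ⟨(f γ).2.1, (hf γ).2.1, ?_⟩⟩
  simp only [mem_iUnion, mem_range, exists_prop, not_exists, not_and]
  rintro _ ⟨β, rfl⟩
  exact hsep β γ

theorem eBasic_mono {a : Finset ℕ} {A A' : EllPt} (h : A'.1 ⊆ A.1) : EBasic a A' ⊆ EBasic a A :=
  fun _ ⟨h₁, h₂, h₃⟩ => ⟨h₁, h₂.trans (union_subset_union_right _ h), h₃⟩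

theorem mem_eBasic_union {b a e : Finset ℕ} {A A' x : EllPt} (hx : x ∈ EBasic b A)
    (he : (e : Set ℕ) = ↑a ∩ x.1) (hA : A.1 ⊆ ↑a ∪ A'.1) (ha : ∀ m ∈ a, ∀ c ∈ A'.1, m < c) :
    x ∈ EBasic (b ∪ e) A' := by
  obtain ⟨hbx, hxA, hlt⟩ := hx
  have hA' {n : ℕ} (hn : n ∈ x.1) (hnb : n ∉ b) (hne : n ∉ e) : n ∈ A'.1 :=
    (hA ((hxA hn).resolve_left hnb)).resolve_left fun hna =>
      hne (Finset.mem_coe.1 (he ▸ ⟨hna, hn⟩))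
  refine ⟨by simp [Finset.coe_union, he, hbx], fun n hn => ?_, fun m hm n hn hnbe => ?_⟩
  · by_cases hnbe : n ∈ b ∪ e
    · exact Or.inl hnbe
    · rw [Finset.mem_union, not_or] at hnbe
      exact Or.inr (hA' hn hnbe.1 hnbe.2)
  · rw [Finset.mem_union, not_or] at hnbe
    rcases Finset.mem_union.1 hm with hmb | hme
    · exact hlt m hmb n hn hnbe.1
    · have hme : m ∈ (e : Set ℕ) := hme
      rw [he] at hme
      exact ha m hme.1 n (hA' hn hnbe.1 hnbe.2)

/-- The basic set `[b, C]` in normal form `max b < min C`, ordered by Mathias extension. -/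
structure MathiasCond where
  b : Finset ℕ
  C : Set ℕ
  infinite_C : C.Infinite
  lt_of_mem : ∀ m ∈ b, ∀ c ∈ C, m < c

namespace MathiasCond

instance : Preorder MathiasCond where
  le q p := p.b ⊆ q.b ∧ ↑q.b ⊆ ↑p.b ∪ p.C ∧ q.C ⊆ p.C
  le_refl p := ⟨subset_rfl, subset_union_left, subset_rfl⟩
  le_trans r q p hrq hqp := ⟨hqp.1.trans hrq.1,
    hrq.2.1.trans (union_subset hqp.2.1 (hqp.2.2.trans subset_union_right)), hrq.2.2.trans hqp.2.2⟩

def pts (p : MathiasCond) : Set EllPt := EBasic p.b ⟨p.C, p.infinite_C⟩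

theorem mem_pts {p : MathiasCond} {x : EllPt} : x ∈ p.pts ↔ ↑p.b ⊆ x.1 ∧ x.1 ⊆ ↑p.b ∪ p.C :=
  ⟨fun h => ⟨h.1, h.2.1⟩, fun ⟨h₁, h₂⟩ =>
    ⟨h₁, h₂, fun m hm n hn hnb => p.lt_of_mem m hm n ((h₂ hn).resolve_left hnb)⟩⟩

theorem pts_mono {p q : MathiasCond} (h : q ≤ p) : q.pts ⊆ p.pts := fun x hx => by
  obtain ⟨h₁, h₂⟩ := mem_pts.1 hx
  exact mem_pts.2 ⟨(Finset.coe_subset.2 h.1).trans h₁,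
    h₂.trans (union_subset h.2.1 (h.2.2.trans subset_union_right))⟩

theorem pts_nonempty (p : MathiasCond) : p.pts.Nonempty :=
  ⟨⟨↑p.b ∪ p.C, p.infinite_C.mono subset_union_right⟩, mem_pts.2 ⟨subset_union_left, subset_rfl⟩⟩

def ofBasic (a : Finset ℕ) (A : EllPt) : MathiasCond where
  b := a
  C := {c ∈ A.1 | ∀ m ∈ a, m < c}
  infinite_C := (A.2.sdiff (finite_Iic (a.sup id))).mono fun _ hc =>
    ⟨hc.1, fun _ hm => (Finset.le_sup (f := id) hm).trans_lt (not_le.1 hc.2)⟩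
  lt_of_mem m hm _ hc := hc.2 m hm

@[simp]
theorem ofBasic_b (a : Finset ℕ) (A : EllPt) : (ofBasic a A).b = a := rfl

theorem ofBasic_C_subset (a : Finset ℕ) (A : EllPt) : (ofBasic a A).C ⊆ A.1 := fun _ hc => hc.1

theorem pts_ofBasic (a : Finset ℕ) (A : EllPt) : (ofBasic a A).pts = EBasic a A := by
  refine (eBasic_mono (ofBasic_C_subset a A)).antisymm fun x ⟨h₁, h₂, h₃⟩ =>
    ⟨h₁, fun n hn => ?_, h₃⟩
  by_cases hna : n ∈ a
  · exact Or.inl hna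
  · exact Or.inr ⟨(h₂ hn).resolve_left hna, fun m hm => h₃ m hm n hn hna⟩

theorem ofBasic_le {q : MathiasCond} {a : Finset ℕ} {A : EllPt} (hb : q.b ⊆ a)
    (ha : ↑a ⊆ ↑q.b ∪ q.C) (hA : A.1 ⊆ q.C) : ofBasic a A ≤ q :=
  ⟨hb, ha, fun _ hc => hA hc.1⟩

theorem exists_le_b_ssubset (p : MathiasCond) : ∃ q ≤ p, p.b ⊂ q.b := by
  obtain ⟨n, hn⟩ := p.infinite_C.nonempty
  refine ⟨ofBasic (insert n p.b) ⟨p.C, p.infinite_C⟩, ofBasic_le (Finset.subset_insert _ _)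
    ?_ subset_rfl, Finset.ssubset_insert fun h => (p.lt_of_mem n h n hn).false⟩
  rw [Finset.coe_insert]
  exact insert_subset (Or.inr hn) subset_union_left

theorem exists_mem_pts_of_chain (g : ℕ → MathiasCond) (hle : ∀ k, g (k + 1) ≤ g k)
    (hb : ∀ k, (g k).b ⊂ (g (k + 1)).b) : ∃ x : EllPt, ∀ k, x ∈ (g k).pts := by
  have hanti : Antitone g := antitone_nat_of_succ_le hle
  have hcard : StrictMono fun k => (g k).b.card :=
    strictMono_nat_of_lt_succ fun k => Finset.card_lt_card (hb k)
  have hinf : (⋃ k, ((g k).b : Set ℕ)).Infinite := fun hfin => by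
    have hbound (k : ℕ) : (g k).b.card ≤ hfin.toFinset.card :=
      Finset.card_le_card fun n hn => hfin.mem_toFinset.2 (mem_iUnion.2 ⟨k, hn⟩)
    exact (hcard.id_le _).not_gt ((hbound _).trans_lt (hfin.toFinset.card.lt_succ_self))
  refine ⟨⟨_, hinf⟩, fun k => mem_pts.2 ⟨subset_iUnion (fun k => ((g k).b : Set ℕ)) k, ?_⟩⟩
  refine iUnion_subset fun m => ?_
  rcases le_total m k with h | h
  · exact (Finset.coe_subset.2 (hanti h).1).trans subset_union_left
  · exact (hanti h).2.1

end MathiasCond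

open MathiasCond

def NullBelow (X : Set EllPt) (p : MathiasCond) : Prop :=
  ∀ q ≤ p, ∃ B : EllPt, B.1 ⊆ q.C ∧ EBasic q.b B ∩ X = ∅

def FullBelow (X : Set EllPt) (p : MathiasCond) : Prop :=
  ∃ q ≤ p, q.pts ⊆ X

theorem nullBelow_empty (p : MathiasCond) : NullBelow ∅ p :=
  fun q _ => ⟨⟨q.C, q.infinite_C⟩, subset_rfl, inter_empty _⟩

theorem RamseyNull.nullBelow {X : Set EllPt} (h : RamseyNull X) (p : MathiasCond) :
    NullBelow X p :=
  fun q _ => h q.b ⟨q.C, q.infinite_C⟩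

section NullBelow

variable {X Y : Set EllPt} {p q : MathiasCond}

theorem NullBelow.exists_notMem (h : NullBelow X p) (hq : q ≤ p) : ∃ y ∈ q.pts, y ∉ X := by
  obtain ⟨B, hBq, hB⟩ := h q hq
  obtain ⟨y, hy⟩ := (ofBasic q.b B).pts_nonempty
  rw [pts_ofBasic] at hy
  exact ⟨y, eBasic_mono hBq hy, fun hyX => hB.subset ⟨hy, hyX⟩⟩

theorem NullBelow.not_fullBelow (h : NullBelow X p) : ¬ FullBelow X p := fun ⟨_, hq, hqX⟩ =>
  let ⟨_, hy, hyX⟩ := h.exists_notMem hq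
  hyX (hqX hy)

theorem FullBelow.exists_b_ssubset (h : FullBelow X p) : ∃ q ≤ p, p.b ⊂ q.b ∧ q.pts ⊆ X := by
  obtain ⟨r, hrp, hrX⟩ := h
  obtain ⟨q, hqr, hb⟩ := r.exists_le_b_ssubset
  exact ⟨q, hqr.trans hrp, hrp.1.trans_ssubset hb, (pts_mono hqr).trans hrX⟩

theorem CompletelyRamsey.nullBelow_or_fullBelow (hX : CompletelyRamsey X) (p : MathiasCond) :
    NullBelow X p ∨ FullBelow X p := by
  by_contra! h
  obtain ⟨hnull, hfull⟩ := h
  simp only [NullBelow, not_forall, not_exists, not_and] at hnull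
  obtain ⟨q, hqp, hq⟩ := hnull
  obtain ⟨B, hBq, hB | hB⟩ := hX q.b ⟨q.C, q.infinite_C⟩
  · exact hfull ⟨ofBasic q.b B, (ofBasic_le subset_rfl subset_union_left hBq).trans hqp,
      (pts_ofBasic q.b B).trans_subset hB⟩
  · exact hq B hBq hB

theorem NullBelow.union (hX : NullBelow X p) (hY : NullBelow Y p) : NullBelow (X ∪ Y) p := by
  intro q hq
  obtain ⟨B₁, hB₁, hX₁⟩ := hX q hq
  obtain ⟨B₂, hB₂, hY₂⟩ :=
    hY (ofBasic q.b B₁) ((ofBasic_le subset_rfl subset_union_left hB₁).trans hq)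
  have hB₂₁ : B₂.1 ⊆ B₁.1 := hB₂.trans (ofBasic_C_subset _ _)
  refine ⟨B₂, hB₂₁.trans hB₁, ?_⟩
  rw [inter_union_distrib_left, ← ofBasic_b q.b B₁, hY₂, union_empty]
  exact subset_empty_iff.1 ((inter_subset_inter_left _ (eBasic_mono hB₂₁)).trans hX₁.le)

theorem exists_subset_forall_eBasic_inter_eq_empty {κ : Type*} {X : κ → Set EllPt} (T : Finset κ)
    (e : κ → Finset ℕ) (hX : ∀ t ∈ T, NullBelow (X t) p) (hq : q ≤ p)
    (he : ∀ t ∈ T, ↑(e t) ⊆ q.C) {B : EllPt} (hB : B.1 ⊆ q.C) :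
    ∃ B' : EllPt, B'.1 ⊆ B.1 ∧ ∀ t ∈ T, EBasic (q.b ∪ e t) B' ∩ X t = ∅ := by
  classical
  induction T using Finset.induction_on with
  | empty => exact ⟨B, subset_rfl, by simp⟩
  | insert t T _ ih =>
    obtain ⟨B₁, hB₁, h₁⟩ := ih (fun t' ht' => hX t' (Finset.mem_insert_of_mem ht'))
      fun t' ht' => he t' (Finset.mem_insert_of_mem ht')
    have hr : ofBasic (q.b ∪ e t) B₁ ≤ q := ofBasic_le Finset.subset_union_left
      (by simpa using union_subset_union_right _ (he t (Finset.mem_insert_self t T)))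
      (hB₁.trans hB)
    obtain ⟨B₂, hB₂, h₂⟩ := hX t (Finset.mem_insert_self t T) _ (hr.trans hq)
    have hB₂₁ : B₂.1 ⊆ B₁.1 := hB₂.trans (ofBasic_C_subset _ _)
    refine ⟨B₂, hB₂₁.trans hB₁, fun t' ht' => ?_⟩
    rcases Finset.mem_insert.1 ht' with rfl | ht'
    · exact h₂
    · exact subset_empty_iff.1 ((inter_subset_inter_left _ (eBasic_mono hB₂₁)).trans (h₁ t' ht').le)

end NullBelow

theorem exists_fusion_step {X : ℕ → Set EllPt} {p q : MathiasCond} (h : ∀ n, NullBelow (X n) p)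
    (hq : q ≤ p) (k : ℕ) {s : Finset ℕ} {B : EllPt} (hs : ↑s ⊆ q.C) (hB : B.1 ⊆ q.C) :
    ∃ n ∈ B.1, ∃ B' : EllPt, B'.1 ⊆ B.1 \ Iic n ∧
      ∀ j ≤ k, ∀ e ⊆ insert n s, EBasic (q.b ∪ e) B' ∩ X j = ∅ := by
  obtain ⟨n, hn⟩ := B.2.nonempty
  have hns : ↑(insert n s) ⊆ q.C := by
    rw [Finset.coe_insert]
    exact insert_subset (hB hn) hs
  obtain ⟨B', hB', hkill⟩ := exists_subset_forall_eBasic_inter_eq_empty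
    (Finset.range (k + 1) ×ˢ (insert n s).powerset) Prod.snd (fun t _ => h t.1) hq
    (fun t ht =>
      (Finset.coe_subset.2 (Finset.mem_powerset.1 (Finset.mem_product.1 ht).2)).trans hns)
    (B := ⟨B.1 \ Iic n, B.2.sdiff (finite_Iic n)⟩) (sdiff_subset.trans hB)
  exact ⟨n, hn, B', hB', fun j hj e he => hkill (j, e) (by simp [hj, he])⟩

theorem NullBelow.iUnion {X : ℕ → Set EllPt} {p : MathiasCond} (h : ∀ n, NullBelow (X n) p) :
    NullBelow (⋃ n, X n) p := by
  classical
  intro q hq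
  -- Fusion: a state `(s, B)` is a finite part `s` of the diagonal set built so far and a
  -- reservoir `B` lying above it; step `k` adds `n ∈ B` to `s` and shrinks `B` so that
  -- `[q.b ∪ e, B]` avoids `X 0, …, X k` for every `e ⊆ s`.
  let P : Finset ℕ × EllPt → Prop := fun s =>
    ↑s.1 ⊆ q.C ∧ s.2.1 ⊆ q.C ∧ ∀ m ∈ s.1, ∀ c ∈ s.2.1, m < c
  let R : ℕ → Finset ℕ × EllPt → Finset ℕ × EllPt → Prop := fun k s s' =>
    ∃ n ∈ s.2.1, s'.1 = insert n s.1 ∧ s'.2.1 ⊆ s.2.1 ∧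
      ∀ j ≤ k, ∀ e ⊆ s'.1, EBasic (q.b ∪ e) s'.2 ∩ X j = ∅
  have step : ∀ k s, P s → ∃ s', P s' ∧ R k s s' := by
    rintro k ⟨s, B⟩ ⟨hs, hB, hsB⟩
    obtain ⟨n, hn, B', hB', hkill⟩ := exists_fusion_step h hq k hs hB
    refine ⟨(insert n s, B'), ⟨?_, hB'.trans (sdiff_subset.trans hB), fun m hm c hc => ?_⟩,
      n, hn, rfl, hB'.trans sdiff_subset, hkill⟩
    · rw [Finset.coe_insert]
      exact insert_subset (hB hn) hs
    · rcases Finset.mem_insert.1 hm with rfl | hm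
      · exact not_le.1 (hB' hc).2
      · exact hsB m hm c (hB' hc).1
  obtain ⟨f, hf⟩ := Nat.exists_seq_of_forall_exists P R step
    (a₀ := (∅, ⟨q.C, q.infinite_C⟩)) ⟨by simp, subset_rfl, by simp⟩
  choose n hnB hs hB hkill using fun k => (hf k).2
  have hBanti : Antitone fun k => (f k).2.1 := antitone_nat_of_succ_le hB
  have hsmono : Monotone fun k => (f k).1 :=
    monotone_nat_of_le_succ fun k => by rw [hs k]; exact Finset.subset_insert _ _
  have hns (k : ℕ) : n k ∈ (f (k + 1)).1 := by rw [hs k]; exact Finset.mem_insert_self _ _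
  have hnmono : StrictMono n :=
    strictMono_nat_of_lt_succ fun k => (hf (k + 1)).1.2.2 _ (hns k) _ (hnB (k + 1))
  refine ⟨⟨range n, infinite_range_of_injective hnmono.injective⟩,
    range_subset_iff.2 fun k => (hf k).1.2.1 (hnB k), eq_empty_iff_forall_notMem.2 ?_⟩
  rintro x ⟨hx, hxX⟩
  obtain ⟨j, hj⟩ := mem_iUnion.1 hxX
  -- `x` already lives in the basic set that step `j` made disjoint from `X j`.
  have hrange : range n ⊆ ↑(f (j + 1)).1 ∪ (f (j + 1)).2.1 := by
    rintro _ ⟨m, rfl⟩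
    rcases lt_or_ge m (j + 1) with hm | hm
    · exact Or.inl (hsmono (Nat.succ_le_of_lt hm) (hns m))
    · exact Or.inr (hBanti hm (hnB m))
  have hxj := mem_eBasic_union hx (Finset.coe_filter (· ∈ x.1) _) hrange (hf (j + 1)).1.2.2
  exact (hkill j j le_rfl _ (Finset.filter_subset _ _)).subset ⟨hxj, hj⟩

section LouveauSimpson

variable {ι : Type} {F : ι → Set EllPt}

theorem exists_split_of_pts_subset (hrn : ∀ i, RamseyNull (F i))
    (hcr : ∀ I : Set ι, CompletelyRamsey (⋃ i ∈ I, F i)) {r : MathiasCond} {E : Set ι}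
    (hE : #E ≤ 𝔠) (hrE : r.pts ⊆ ⋃ i ∈ E, F i) :
    ∃ E' ⊆ E, FullBelow (⋃ i ∈ E', F i) r ∧ FullBelow (⋃ i ∈ E \ E', F i) r := by
  by_contra! hsplit
  have hnull : NullBelow (⋃ i ∈ E, F i) r :=
    sigma_prime_ideal_contains_of_mk_le_continuum hE (D := fun S => NullBelow (⋃ i ∈ S, F i) r)
      (by simpa using nullBelow_empty r) (fun i _ => by simpa using (hrn i).nullBelow r)
      (fun S T hS hT => by rw [biUnion_union]; exact hS.union hT)
      (fun V hV => by rw [biUnion_iUnion]; exact NullBelow.iUnion hV)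
      fun S hS => ((hcr S).nullBelow_or_fullBelow r).imp_right fun hfull =>
        ((hcr (E \ S)).nullBelow_or_fullBelow r).resolve_right (hsplit S hS hfull)
  exact hnull.not_fullBelow ⟨r, le_rfl, hrE⟩

-- The conditions shrink to a point, which lies in only finitely many `F i`.
theorem exists_forall_mem_of_chain (hpf : ∀ x : EllPt, {i | x ∈ F i}.Finite)
    (g : ℕ → MathiasCond) {E : ℕ → Set ι} (hle : ∀ k, g (k + 1) ≤ g k)
    (hb : ∀ k, (g k).b ⊂ (g (k + 1)).b) (hE : ∀ k, E (k + 1) ⊆ E k)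
    (hcov : ∀ k, (g k).pts ⊆ ⋃ i ∈ E k, F i) : ∃ i, ∀ k, i ∈ E k := by
  obtain ⟨x, hx⟩ := exists_mem_pts_of_chain g hle hb
  have hne (k : ℕ) : ({i | x ∈ F i} ∩ E k).Nonempty := by
    obtain ⟨i, hi, hxi⟩ := mem_iUnion₂.1 (hcov k (hx k))
    exact ⟨i, hxi, hi⟩
  obtain ⟨i, hi⟩ := nonempty_iInter_of_antitone_of_finite
    (antitone_nat_of_succ_le fun k => inter_subset_inter_right _ (hE k))
    ((hpf x).inter_of_left _) hne
  exact ⟨i, fun k => (mem_iInter.1 hi k).2⟩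

theorem continuum_le_mk_of_pts_subset (hpf : ∀ x : EllPt, {i | x ∈ F i}.Finite)
    (hrn : ∀ i, RamseyNull (F i)) (hcr : ∀ I : Set ι, CompletelyRamsey (⋃ i ∈ I, F i))
    {p : MathiasCond} {I : Set ι} (hpI : p.pts ⊆ ⋃ i ∈ I, F i) : 𝔠 ≤ #I := by
  rcases le_total #I 𝔠 with hI | hI
  swap
  · exact hI
  let T := {s : MathiasCond × Set ι // s.2 ⊆ I ∧ s.1.pts ⊆ ⋃ i ∈ s.2, F i}
  have hsplit (s : T) : ∃ t : Bool → T,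
      (∀ b, (t b).1.1 ≤ s.1.1 ∧ s.1.1.b ⊂ (t b).1.1.b ∧ (t b).1.2 ⊆ s.1.2) ∧
        Disjoint (t false).1.2 (t true).1.2 := by
    obtain ⟨⟨r, E⟩, hEI, hrE⟩ := s
    obtain ⟨E', hE'E, h₀, h₁⟩ :=
      exists_split_of_pts_subset hrn hcr ((mk_le_mk_of_subset hEI).trans hI) hrE
    obtain ⟨r₀, hr₀, hb₀, hr₀E'⟩ := h₀.exists_b_ssubset
    obtain ⟨r₁, hr₁, hb₁, hr₁E'⟩ := h₁.exists_b_ssubset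
    refine ⟨fun b => cond b ⟨(r₁, E \ E'), sdiff_subset.trans hEI, hr₁E'⟩
      ⟨(r₀, E'), hE'E.trans hEI, hr₀E'⟩, fun b => ?_, disjoint_sdiff_right⟩
    cases b
    exacts [⟨hr₀, hb₀, hE'E⟩, ⟨hr₁, hb₁, sdiff_subset⟩]
  choose child hchild using hsplit
  let root : T := ⟨(p, I), subset_rfl, hpI⟩
  have hbranch (c : ℕ → Bool) : ∃ i, ∀ k, i ∈ (cantorBranch root child c k).1.2 :=
    let g := cantorBranch root child c
    exists_forall_mem_of_chain hpf (fun k => (g k).1.1) (fun k => ((hchild (g k)).1 (c k)).1)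
      (fun k => ((hchild (g k)).1 (c k)).2.1) (fun k => ((hchild (g k)).1 (c k)).2.2)
      fun k => (g k).2.2
  choose η hη using hbranch
  have hinj := injective_of_forall_mem_cantorBranch root child (fun s => s.1.2)
    (fun s => (hchild s).2) hη
  calc 𝔠 = #(ℕ → Bool) := by simp
    _ ≤ #I := mk_le_of_injective (f := fun c => ⟨η c, hη c 0⟩) fun c c' h =>
      hinj (congrArg Subtype.val h)

theorem nullBelow_of_mk_lt_continuum (hpf : ∀ x : EllPt, {i | x ∈ F i}.Finite)
    (hrn : ∀ i, RamseyNull (F i)) (hcr : ∀ I : Set ι, CompletelyRamsey (⋃ i ∈ I, F i))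
    (p : MathiasCond) {E : Set ι} (hE : #E < 𝔠) : NullBelow (⋃ i ∈ E, F i) p :=
  ((hcr E).nullBelow_or_fullBelow p).resolve_right fun ⟨_, _, hq⟩ =>
    (continuum_le_mk_of_pts_subset hpf hrn hcr hq).not_gt hE

theorem pts_not_subset_iUnion (hpf : ∀ x : EllPt, {i | x ∈ F i}.Finite)
    (hrn : ∀ i, RamseyNull (F i)) (hcr : ∀ I : Set ι, CompletelyRamsey (⋃ i ∈ I, F i))
    (p : MathiasCond) : ¬ p.pts ⊆ ⋃ i, F i := by
  intro hp
  have hσ : #{B : EllPt // B.1 ⊆ p.C} ≤ 𝔠 :=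
    (mk_subtype_le _).trans ((mk_subtype_le _).trans mk_set_nat.le)
  obtain ⟨E, hE⟩ := exists_bernstein_subfamily aleph0_lt_continuum hσ hpf
    (S := fun B => EBasic p.b B.1) (fun B => (eBasic_mono B.2).trans hp) fun B E hE => by
      obtain ⟨y, hy, hyE⟩ := (nullBelow_of_mk_lt_continuum hpf hrn hcr p hE).exists_notMem
        (ofBasic_le subset_rfl subset_union_left B.2)
      rw [pts_ofBasic] at hy
      exact ⟨y, hy, fun i hi hyi => hyE (mem_biUnion hi hyi)⟩
  obtain ⟨B, hBp, hB | hB⟩ := hcr E p.b ⟨p.C, p.infinite_C⟩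
  · obtain ⟨y, hy, hyE⟩ := (hE ⟨B, hBp⟩).2
    exact hyE (hB hy)
  · obtain ⟨x, hx⟩ := (hE ⟨B, hBp⟩).1
    exact hB.subset hx

end LouveauSimpson

/-- Louveau–Simpson theorem: the union of a point-finite family of Ramsey null
sets, all of whose subfamilies have completely Ramsey unions, is Ramsey null. -/
theorem stmt16 {ι : Type} (F : ι → Set EllPt)
    (hpf : ∀ x : EllPt, {i | x ∈ F i}.Finite)
    (hrn : ∀ i, RamseyNull (F i))
    (hcr : ∀ I : Set ι, CompletelyRamsey (⋃ i ∈ I, F i)) :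
    RamseyNull (⋃ i, F i) := by
  intro a A
  obtain ⟨B, hBA, hB | hB⟩ := hcr univ a A
  · rw [biUnion_univ, ← pts_ofBasic] at hB
    exact (pts_not_subset_iUnion hpf hrn hcr _ hB).elim
  · exact ⟨B, hBA, by rwa [biUnion_univ] at hB⟩
end

section
/- Let ℱ = {F_f : f ∈ 2^ω} be a family of subsets of a non-meager X ⊆ Ellentuck space covering X, and for s ∈ 2^{<ω} put F[s] = ⋃{F_f : s ⊆ f}. If for some s ∈ 2^{<ω} and every t ⊇ s there exists i < 2 such that F[t⌢i] is Ramsey null, then F[s] is covered by countably many Ramsey null sets together with a single member F_{f_s} of ℱ; hence if each F_f is Ramsey null and Ramsey null sets form a σ-ideal, F[s] is Ramsey null. -/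
open Set Topology

/-- `f ∈ 2^ω` extends `s ∈ 2^{<ω}`. -/
def ExtendsL (s : List Bool) (f : ℕ → Bool) : Prop :=
  ∀ i : Fin s.length, f i = s.get i

/-- `F[s] = ⋃ {F_f : s ⊆ f}`. -/
def Fblk (F : (ℕ → Bool) → Set EllPt) (s : List Bool) : Set EllPt :=
  ⋃ f ∈ {f | ExtendsL s f}, F f

/-! Let `e t` be a child of `t` with `F[t⌢e t]` Ramsey null, and let `f_s` be the branch through
`s` that always takes the other child. Every `f ⊇ s` other than `f_s` leaves this branch at some
node `tₙ`, necessarily through `tₙ⌢e tₙ`, so `F[s] ⊆ F_{f_s} ∪ ⋃ₙ F[tₙ⌢e tₙ]`.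

Ramsey null sets are closed under countable unions by fusion: thinning `A` out step by step
yields pivots `k₀ < k₁ < ⋯` and sets `Bₘ ∋ kₘ, kₘ₊₁, …` such that `[a ∪ v, Bₘ]` misses `Xₘ` for
every `v ⊆ {k₀, …, kₘ₋₁}`. Each `C ∈ [a, {kᵢ}]` lies in `[a ∪ (C ∩ {k₀, …, kₘ₋₁}), Bₘ]`, so it
avoids every `Xₘ`. -/

lemma EBasic_mono {b : Finset ℕ} {A B : EllPt} (h : B.1 ⊆ A.1) : EBasic b B ⊆ EBasic b A :=
  fun _ ⟨h₁, h₂, h₃⟩ => ⟨h₁, h₂.trans (union_subset_union_right _ h), h₃⟩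

lemma EBasic_inter_eq_empty_of_subset {b : Finset ℕ} {A B : EllPt} {Y : Set EllPt}
    (h : B.1 ⊆ A.1) (hA : EBasic b A ∩ Y = ∅) : EBasic b B ∩ Y = ∅ :=
  subset_empty_iff.1 (hA ▸ inter_subset_inter_left _ (EBasic_mono h))

lemma RamseyNull.mono {Y Z : Set EllPt} (hZ : RamseyNull Z) (h : Y ⊆ Z) : RamseyNull Y :=
  fun a A => (hZ a A).imp fun _ ⟨hBA, hB⟩ =>
    ⟨hBA, subset_empty_iff.1 (hB ▸ inter_subset_inter_right _ h)⟩

lemma RamseyNull.union {Y Z : Set EllPt} (hY : RamseyNull Y) (hZ : RamseyNull Z) :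
    RamseyNull (Y ∪ Z) := by
  intro a A
  obtain ⟨B, hBA, hB⟩ := hY a A
  obtain ⟨B', hB'B, hB'⟩ := hZ a B
  refine ⟨B', hB'B.trans hBA, ?_⟩
  rw [inter_union_distrib_left, hB', union_empty]
  exact EBasic_inter_eq_empty_of_subset hB'B hB

lemma RamseyNull.exists_subset_forall_mem {Y : Set EllPt} (hY : RamseyNull Y) {ι : Type*}
    (S : Finset ι) (b : ι → Finset ℕ) (A : EllPt) :
    ∃ B : EllPt, B.1 ⊆ A.1 ∧ ∀ i ∈ S, EBasic (b i) B ∩ Y = ∅ := by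
  classical
  induction S using Finset.induction_on with
  | empty => exact ⟨A, subset_rfl, by simp⟩
  | insert j S _ ih =>
    obtain ⟨B, hBA, hB⟩ := ih
    obtain ⟨B', hB'B, hB'⟩ := hY (b j) B
    refine ⟨B', hB'B.trans hBA, ?_⟩
    simp only [Finset.mem_insert, forall_eq_or_imp]
    exact ⟨hB', fun i hi => EBasic_inter_eq_empty_of_subset hB'B (hB i hi)⟩

def EllPt.above (A : EllPt) (N : ℕ) : EllPt :=
  ⟨A.1 \ Iic N, A.2.sdiff (finite_Iic N)⟩

lemma EllPt.mem_above {A : EllPt} {N x : ℕ} : x ∈ (A.above N).1 ↔ x ∈ A.1 ∧ N < x := by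
  simp [EllPt.above]

section Fusion

variable (R : ℕ → Finset ℕ → EllPt → Prop)
  (hR : ∀ m K (A : EllPt), ∃ B : EllPt, B.1 ⊆ A.1 ∧ R m K B)

/-- After `m` steps: the set still to be thinned out and the pivots `{k₀, …, k_{m-1}}`. -/
noncomputable def fusionState (A : EllPt) : ℕ → EllPt × Finset ℕ
  | 0 => (A, ∅)
  | m + 1 =>
    let B := (hR m (fusionState A m).2 (fusionState A m).1).choose
    (B.above (sInf B.1), insert (sInf B.1) (fusionState A m).2)

noncomputable def fusionGood (A : EllPt) (m : ℕ) : EllPt :=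
  (hR m (fusionState R hR A m).2 (fusionState R hR A m).1).choose

noncomputable def fusionPivot (A : EllPt) (m : ℕ) : ℕ :=
  sInf (fusionGood R hR A m).1

variable {R hR} {A : EllPt}

lemma fusionState_succ (m : ℕ) :
    fusionState R hR A (m + 1) =
      ((fusionGood R hR A m).above (fusionPivot R hR A m),
        insert (fusionPivot R hR A m) (fusionState R hR A m).2) := rfl

lemma fusionGood_subset (m : ℕ) : (fusionGood R hR A m).1 ⊆ (fusionState R hR A m).1.1 :=
  (hR m _ _).choose_spec.1

lemma fusionGood_spec (m : ℕ) : R m (fusionState R hR A m).2 (fusionGood R hR A m) :=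
  (hR m _ _).choose_spec.2

lemma fusionPivot_mem (m : ℕ) : fusionPivot R hR A m ∈ (fusionGood R hR A m).1 :=
  Nat.sInf_mem (fusionGood R hR A m).2.nonempty

lemma fusionState_snd (m : ℕ) :
    (fusionState R hR A m).2 = (Finset.range m).image (fusionPivot R hR A) := by
  induction m with
  | zero => rfl
  | succ m ih => rw [fusionState_succ, ih, Finset.range_add_one, Finset.image_insert]

lemma fusionState_succ_subset (m : ℕ) :
    (fusionState R hR A (m + 1)).1.1 ⊆ (fusionGood R hR A m).1 :=
  sdiff_subset

lemma fusionGood_antitone : Antitone fun m => (fusionGood R hR A m).1 :=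
  antitone_nat_of_succ_le fun m =>
    (fusionGood_subset (m + 1)).trans (fusionState_succ_subset m)

lemma fusionPivot_mem_fusionGood {m i : ℕ} (h : m ≤ i) :
    fusionPivot R hR A i ∈ (fusionGood R hR A m).1 :=
  fusionGood_antitone h (fusionPivot_mem i)

lemma fusionPivot_strictMono : StrictMono (fusionPivot R hR A) :=
  strictMono_nat_of_lt_succ fun m =>
    (EllPt.mem_above.1 (fusionGood_subset (m + 1) (fusionPivot_mem (m + 1)))).2

lemma fusionPivot_mem_start (i : ℕ) : fusionPivot R hR A i ∈ A.1 :=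
  fusionGood_subset 0 (fusionPivot_mem_fusionGood (Nat.zero_le i))

theorem exists_fusion (hR : ∀ m K (A : EllPt), ∃ B : EllPt, B.1 ⊆ A.1 ∧ R m K B) (A : EllPt) :
    ∃ k : ℕ → ℕ, StrictMono k ∧ (∀ i, k i ∈ A.1) ∧ ∃ B : ℕ → EllPt,
      ∀ m, R m ((Finset.range m).image k) (B m) ∧ ∀ i, m ≤ i → k i ∈ (B m).1 :=
  ⟨fusionPivot R hR A, fusionPivot_strictMono, fusionPivot_mem_start, fusionGood R hR A,
    fun m => ⟨fusionState_snd (hR := hR) m ▸ fusionGood_spec m,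
      fun _ => fusionPivot_mem_fusionGood⟩⟩

end Fusion

open Classical in
lemma mem_EBasic_of_mem_EBasic_range {a : Finset ℕ} {K B C : EllPt} {k : ℕ → ℕ}
    (hk : StrictMono k) (hka : ∀ i, ∀ p ∈ a, p < k i) (hK : K.1 ⊆ range k)
    (hC : C ∈ EBasic a K) {m : ℕ} (hB : ∀ i, m ≤ i → k i ∈ B.1) :
    C ∈ EBasic (a ∪ ((Finset.range m).image k).filter (· ∈ C.1)) B := by
  obtain ⟨haC, hCK, hCa⟩ := hC
  have early : ∀ i < m, k i ∈ C.1 → k i ∈ ((Finset.range m).image k).filter (· ∈ C.1) :=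
    fun i hi hiC => Finset.mem_filter.2 ⟨Finset.mem_image_of_mem k (Finset.mem_range.2 hi), hiC⟩
  have late : ∀ q ∈ C.1, q ∉ a → q ∉ ((Finset.range m).image k).filter (· ∈ C.1) →
      ∃ i, m ≤ i ∧ k i = q := by
    intro q hq hqa hqv
    obtain hq' | hq' := hCK hq
    · exact absurd hq' hqa
    obtain ⟨i, rfl⟩ := hK hq'
    exact ⟨i, not_lt.1 fun hi => hqv (early i hi hq), rfl⟩
  refine ⟨?_, fun q hq => ?_, fun p hp q hq hqb => ?_⟩
  · simp only [Finset.coe_union, Finset.coe_filter]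
    exact union_subset haC fun _ hx => hx.2
  · by_cases hqb : q ∈ a ∪ ((Finset.range m).image k).filter (· ∈ C.1)
    · exact Or.inl hqb
    · simp only [Finset.mem_union, not_or] at hqb
      obtain ⟨i, hi, rfl⟩ := late q hq hqb.1 hqb.2
      exact Or.inr (hB i hi)
  · simp only [Finset.mem_union, not_or] at hqb
    obtain ⟨i, hi, rfl⟩ := late q hq hqb.1 hqb.2
    rcases Finset.mem_union.1 hp with hp | hp
    · exact hka i p hp
    · obtain ⟨j, hj, rfl⟩ := Finset.mem_image.1 (Finset.mem_filter.1 hp).1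
      exact hk ((Finset.mem_range.1 hj).trans_le hi)

theorem ramseyNull_iUnion {X : ℕ → Set EllPt} (hX : ∀ n, RamseyNull (X n)) :
    RamseyNull (⋃ n, X n) := by
  intro a A
  obtain ⟨k, hk, hkA, B, hB⟩ := exists_fusion
    (R := fun m K B => ∀ v ∈ K.powerset, EBasic (a ∪ v) B ∩ X m = ∅)
    (fun m K => (hX m).exists_subset_forall_mem K.powerset (a ∪ ·)) (A.above (a.sup id))
  have hka : ∀ i, ∀ p ∈ a, p < k i := fun i _ hp =>
    (Finset.le_sup (f := id) hp).trans_lt (EllPt.mem_above.1 (hkA i)).2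
  refine ⟨⟨range k, infinite_range_of_injective hk.injective⟩,
    range_subset_iff.2 fun i => (EllPt.mem_above.1 (hkA i)).1, ?_⟩
  refine eq_empty_of_forall_notMem fun C ⟨hC, hCX⟩ => ?_
  obtain ⟨n, hn⟩ := mem_iUnion.1 hCX
  classical
  have hCn := mem_EBasic_of_mem_EBasic_range hk hka subset_rfl hC (hB n).2
  exact ((hB n).1 _ (Finset.mem_powerset.2 (Finset.filter_subset _ _))).subset ⟨hCn, hn⟩

lemma extendsL_append_singleton_iff {t : List Bool} {b : Bool} {f : ℕ → Bool} :
    ExtendsL (t ++ [b]) f ↔ ExtendsL t f ∧ f t.length = b := by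
  constructor
  · intro h
    refine ⟨fun i => ?_, by simpa using h ⟨t.length, by simp⟩⟩
    simpa [List.getElem_append_left i.2] using h ⟨i, by simp⟩
  · rintro ⟨h, hb⟩ ⟨i, hi⟩
    rw [List.get_eq_getElem]
    rcases Nat.lt_or_ge i t.length with hit | hit
    · rw [List.getElem_append_left hit]
      exact h ⟨i, hit⟩
    · obtain rfl : i = t.length := by simp at hi; omega
      simpa using hb

lemma mem_Fblk {F : (ℕ → Bool) → Set EllPt} {t : List Bool} {x : EllPt} :
    x ∈ Fblk F t ↔ ∃ f, ExtendsL t f ∧ x ∈ F f := by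
  simp [Fblk]

section Spine

variable (e : List Bool → Bool) (s : List Bool)

def spine : ℕ → List Bool
  | 0 => s
  | n + 1 => spine n ++ [!e (spine n)]

def spineLimit (k : ℕ) : Bool :=
  (spine e s (k + 1)).getD k false

variable {e s}

lemma spine_length (n : ℕ) : (spine e s n).length = s.length + n := by
  induction n with
  | zero => rfl
  | succ n ih => simp [spine, ih, Nat.add_assoc]

lemma spine_prefix_spine {m n : ℕ} (h : m ≤ n) : spine e s m <+: spine e s n := by
  induction n, h using Nat.le_induction with
  | base => exact List.prefix_rfl
  | succ n _ ih => exact ih.trans (List.prefix_append _ _)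

lemma prefix_spine (n : ℕ) : s <+: spine e s n :=
  spine_prefix_spine (Nat.zero_le n)

lemma extendsL_spineLimit (n : ℕ) : ExtendsL (spine e s n) (spineLimit e s) := by
  intro ⟨i, hi⟩
  have hi' : i < (spine e s (i + 1)).length := by rw [spine_length]; omega
  rw [spineLimit, List.getD_eq_getElem _ _ hi', List.get_eq_getElem]
  rcases le_total n (i + 1) with h | h
  · exact ((spine_prefix_spine h).getElem hi).symm
  · exact (spine_prefix_spine h).getElem hi'

lemma eq_spineLimit {f : ℕ → Bool} (hf : ∀ n, ExtendsL (spine e s n) f) :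
    f = spineLimit e s := by
  funext k
  have hk : k < (spine e s (k + 1)).length := by rw [spine_length]; omega
  rw [spineLimit, List.getD_eq_getElem _ _ hk]
  exact hf (k + 1) ⟨k, hk⟩

lemma extendsL_spine_or_exit {f : ℕ → Bool} (hf : ExtendsL s f) (n : ℕ) :
    ExtendsL (spine e s n) f ∨ ∃ m < n, ExtendsL (spine e s m ++ [e (spine e s m)]) f := by
  induction n with
  | zero => exact Or.inl hf
  | succ n ih =>
    rcases ih with h | ⟨m, hm, h⟩
    · by_cases hexit : f (spine e s n).length = e (spine e s n)
      · exact Or.inr ⟨n, n.lt_succ_self, extendsL_append_singleton_iff.2 ⟨h, hexit⟩⟩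
      · exact Or.inl (extendsL_append_singleton_iff.2 ⟨h, Bool.eq_not_iff.2 hexit⟩)
    · exact Or.inr ⟨m, hm.trans n.lt_succ_self, h⟩

lemma Fblk_subset_spineLimit_union (F : (ℕ → Bool) → Set EllPt) :
    Fblk F s ⊆ F (spineLimit e s) ∪ ⋃ n, Fblk F (spine e s n ++ [e (spine e s n)]) := by
  intro x hx
  obtain ⟨f, hf, hxf⟩ := mem_Fblk.1 hx
  by_cases hall : ∀ n, ExtendsL (spine e s n) f
  · exact Or.inl (eq_spineLimit hall ▸ hxf)
  · obtain ⟨n, hn⟩ := not_forall.1 hall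
    obtain ⟨m, -, hm⟩ := (extendsL_spine_or_exit hf n).resolve_left hn
    exact Or.inr (mem_iUnion.2 ⟨m, mem_Fblk.2 ⟨f, hm, hxf⟩⟩)

end Spine

theorem stmt17_general (F : (ℕ → Bool) → Set EllPt) (s : List Bool)
    (H : ∀ t : List Bool, s <+: t → ∃ i : Bool, RamseyNull (Fblk F (t ++ [i]))) :
    (∃ fs : ℕ → Bool, ExtendsL s fs ∧
        ∃ g : ℕ → Set EllPt, (∀ n, RamseyNull (g n)) ∧ Fblk F s ⊆ F fs ∪ ⋃ n, g n) ∧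
      ((∀ f, RamseyNull (F f)) → RamseyNull (Fblk F s)) := by
  have hbad : ∀ t, ∃ i : Bool, s <+: t → RamseyNull (Fblk F (t ++ [i])) := fun t =>
    (em (s <+: t)).elim (fun ht => (H t ht).imp fun _ hi _ => hi)
      fun ht => ⟨false, fun h => absurd h ht⟩
  choose e he using hbad
  have hnull (n : ℕ) : RamseyNull (Fblk F (spine e s n ++ [e (spine e s n)])) :=
    he _ (prefix_spine n)
  refine ⟨⟨spineLimit e s, extendsL_spineLimit 0, _, hnull, Fblk_subset_spineLimit_union F⟩,
    fun hF => ?_⟩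
  exact ((hF _).union (ramseyNull_iUnion hnull)).mono (Fblk_subset_spineLimit_union F)

/-- If `F = {F_f : f ∈ 2^ω}` covers a non-meager `X` and for some `s` every
`t ⊇ s` has a child `t⌢i` with `F[t⌢i]` Ramsey null, then `F[s]` is covered by a
single member `F_{f_s}` together with countably many Ramsey null sets; hence if
each `F_f` is Ramsey null then `F[s]` is Ramsey null. -/
theorem stmt17 (X : Set EllPt) (hX : ¬ IsMeagre X)
    (F : (ℕ → Bool) → Set EllPt) (hsub : ∀ f, F f ⊆ X) (hcov : X ⊆ ⋃ f, F f)
    (s : List Bool)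
    (H : ∀ t : List Bool, s <+: t → ∃ i : Bool, RamseyNull (Fblk F (t ++ [i]))) :
    (∃ fs : ℕ → Bool, ExtendsL s fs ∧
        ∃ g : ℕ → Set EllPt, (∀ n, RamseyNull (g n)) ∧ Fblk F s ⊆ F fs ∪ ⋃ n, g n) ∧
      ((∀ f, RamseyNull (F f)) → RamseyNull (Fblk F s)) :=
  stmt17_general F s H
end
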